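/- arXiv:1909.06277 — 10 statements merged into one kernel-verified Lean document; each statement's English description precedes it below -/
import Mathlib

section
/- Let ψ be the function defined in the context. Then ψ is four times differentiable on (0, 2l0), and for every r ∈ (0, 2l0) one has ψ'''(r) ≥ 0 and ψ''''(r) ≤ 0. -/
open Set Filter MeasureTheory

/-! On `(0, 2l0)` the fundamental theorem of calculus gives `ψ' = c1 + exp ∘ u` with
`u = -c2 g`, so `ψ''' = (u'' + u'^2) eᵘ` and `ψ'''' = (u''' + 3u'u'' + u'^3) eᵘ`. The hypotheses
on `g` say `u' ≤ 0`, `u'' ≥ 0`, `u''' ≤ 0`, which fixes the sign of every term. -/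

theorem hasDerivAt_integral_of_continuousOn_Icc {f : ℝ → ℝ} {a T r : ℝ}
    (hf : ContinuousOn f (Icc a T)) (hr : r ∈ Ioo a T) :
    HasDerivAt (fun x => ∫ s in a..x, f s) (f r) r :=
  intervalIntegral.integral_hasDerivAt_right
    ((hf.mono (Icc_subset_Icc_right hr.2.le)).intervalIntegrable_of_Icc hr.1.le)
    ((hf.mono Ioo_subset_Icc_self).stronglyMeasurableAtFilter isOpen_Ioo r hr)
    (hf.continuousAt (Icc_mem_nhds hr.1 hr.2))

theorem hasDerivAt_of_eq_mul_add_integral {f ψ : ℝ → ℝ} {c a T r : ℝ}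
    (hf : ContinuousOn f (Icc a T)) (hψ : ∀ x ≤ T, ψ x = c * x + ∫ s in a..x, f s)
    (hr : r ∈ Ioo a T) : HasDerivAt ψ (c + f r) r :=
  ((((hasDerivAt_id' r).const_mul c).congr_deriv (mul_one c)).add
    (hasDerivAt_integral_of_continuousOn_Icc hf hr)).congr_of_eventuallyEq
    (by filter_upwards [Iic_mem_nhds hr.2] with x hx using hψ x hx)

theorem HasDerivAt.mul_exp {p u : ℝ → ℝ} {p' u' x : ℝ} (hp : HasDerivAt p p' x)
    (hu : HasDerivAt u u' x) :
    HasDerivAt (fun y => p y * Real.exp (u y)) ((p' + p x * u') * Real.exp (u x)) x :=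
  (hp.mul hu.exp).congr_deriv (by ring)

section ExpComp

variable {u : ℝ → ℝ} {U : Set ℝ}

theorem eqOn_deriv_exp_comp (hU : IsOpen U) (hu : DifferentiableOn ℝ u U) :
    EqOn (deriv fun x => Real.exp (u x)) (fun x => deriv u x * Real.exp (u x)) U :=
  fun x hx => by rw [deriv_exp (hu.differentiableAt (hU.mem_nhds hx)), mul_comm]

theorem eqOn_deriv_deriv_exp_comp (hU : IsOpen U) (hu : ContDiffOn ℝ 2 u U) :
    EqOn (deriv (deriv fun x => Real.exp (u x)))
      (fun x => (deriv (deriv u) x + deriv u x ^ 2) * Real.exp (u x)) U := by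
  have hu' : ContDiffOn ℝ 1 (deriv u) U := hu.deriv_of_isOpen hU (by norm_num)
  intro x hx
  have hdu := (hu.contDiffAt (hU.mem_nhds hx)).differentiableAt (by norm_num)
  have hddu := (hu'.contDiffAt (hU.mem_nhds hx)).differentiableAt one_ne_zero
  rw [(eqOn_deriv_exp_comp hU (hu.differentiableOn (by norm_num))).deriv hU hx,
    (hddu.hasDerivAt.mul_exp hdu.hasDerivAt).deriv]
  ring

theorem eqOn_deriv_deriv_deriv_exp_comp (hU : IsOpen U) (hu : ContDiffOn ℝ 3 u U) :
    EqOn (deriv (deriv (deriv fun x => Real.exp (u x))))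
      (fun x => (deriv (deriv (deriv u)) x + 3 * deriv u x * deriv (deriv u) x + deriv u x ^ 3) *
        Real.exp (u x)) U := by
  have hu' : ContDiffOn ℝ 2 (deriv u) U := hu.deriv_of_isOpen hU (by norm_num)
  have hu'' : ContDiffOn ℝ 1 (deriv (deriv u)) U := hu'.deriv_of_isOpen hU (by norm_num)
  intro x hx
  have hdu := (hu.contDiffAt (hU.mem_nhds hx)).differentiableAt (by norm_num)
  have hddu := (hu'.contDiffAt (hU.mem_nhds hx)).differentiableAt (by norm_num)
  have hdddu := (hu''.contDiffAt (hU.mem_nhds hx)).differentiableAt one_ne_zero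
  rw [(eqOn_deriv_deriv_exp_comp hU (hu.of_le (by norm_num))).deriv hU hx,
    (HasDerivAt.mul_exp (p := fun y => deriv (deriv u) y + deriv u y ^ 2)
      (hdddu.hasDerivAt.add (hddu.hasDerivAt.pow 2)) hdu.hasDerivAt).deriv]
  push_cast
  ring

theorem deriv_deriv_exp_comp_nonneg (hU : IsOpen U) (hu : ContDiffOn ℝ 2 u U) {x : ℝ}
    (hx : x ∈ U) (hu2 : 0 ≤ deriv (deriv u) x) : 0 ≤ deriv (deriv fun y => Real.exp (u y)) x := by
  rw [eqOn_deriv_deriv_exp_comp hU hu hx]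
  positivity

theorem deriv_deriv_deriv_exp_comp_nonpos (hU : IsOpen U) (hu : ContDiffOn ℝ 3 u U) {x : ℝ}
    (hx : x ∈ U) (hu1 : deriv u x ≤ 0) (hu2 : 0 ≤ deriv (deriv u) x)
    (hu3 : deriv (deriv (deriv u)) x ≤ 0) :
    deriv (deriv (deriv fun y => Real.exp (u y))) x ≤ 0 := by
  rw [eqOn_deriv_deriv_deriv_exp_comp hU hu hx]
  refine mul_nonpos_of_nonpos_of_nonneg ?_ (Real.exp_pos _).le
  nlinarith [mul_nonpos_of_nonpos_of_nonneg hu1 hu2, Odd.pow_nonpos (n := 3) (by decide) hu1]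

end ExpComp

theorem stmt_1_general
    (l0 c1 c2 : ℝ) (hc2 : 0 < c2)
    (g ψ : ℝ → ℝ)
    (hg_cont : ContinuousOn g (Icc 0 (2 * l0)))
    (hg_smooth : ContDiffOn ℝ 3 g (Ioc 0 (2 * l0)))
    (hg1 : ∀ r ∈ Ioc 0 (2 * l0), 0 ≤ deriv g r)
    (hg2 : ∀ r ∈ Ioc 0 (2 * l0), deriv (deriv g) r ≤ 0)
    (hg3 : ∀ r ∈ Ioc 0 (2 * l0), 0 ≤ deriv (deriv (deriv g)) r)
    (hψ1 : ∀ r ≤ 2 * l0, ψ r = c1 * r + ∫ s in (0:ℝ)..r, Real.exp (-(c2 * g s))) :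
    ∀ r ∈ Ioo 0 (2 * l0),
      DifferentiableAt ℝ ψ r ∧ DifferentiableAt ℝ (deriv ψ) r ∧
      DifferentiableAt ℝ (deriv (deriv ψ)) r ∧
      DifferentiableAt ℝ (deriv (deriv (deriv ψ))) r ∧
      0 ≤ deriv (deriv (deriv ψ)) r ∧
      deriv (deriv (deriv (deriv ψ))) r ≤ 0 := by
  set U := Ioo 0 (2 * l0)
  set u : ℝ → ℝ := fun s => -(c2 * g s) with hu_def
  have hU : IsOpen U := isOpen_Ioo
  have hu : ContDiffOn ℝ 3 u U := ((hg_smooth.mono Ioo_subset_Ioc_self).const_smul c2).neg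
  have hG : ContinuousOn (fun s => Real.exp (u s)) (Icc 0 (2 * l0)) :=
    (continuousOn_const.mul hg_cont).neg.rexp
  have hψ : ∀ r ∈ U, HasDerivAt ψ (c1 + Real.exp (u r)) r := fun r hr =>
    hasDerivAt_of_eq_mul_add_integral hG hψ1 hr
  have hψ' : EqOn (deriv ψ) (fun x => c1 + Real.exp (u x)) U := fun r hr => (hψ r hr).deriv
  have hψ'_smooth : ContDiffOn ℝ 3 (deriv ψ) U := (contDiffOn_const.add hu.exp).congr hψ'
  have hψ''_smooth : ContDiffOn ℝ 2 (deriv (deriv ψ)) U :=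
    hψ'_smooth.deriv_of_isOpen hU (by norm_num)
  have hψ'''_smooth : ContDiffOn ℝ 1 (deriv (deriv (deriv ψ))) U :=
    hψ''_smooth.deriv_of_isOpen hU (by norm_num)
  have hψ'' : EqOn (deriv (deriv ψ)) (deriv fun x => Real.exp (u x)) U := by
    simpa only [deriv_const_add'] using hψ'.deriv hU
  intro r hr
  obtain ⟨hu1, hu2, hu3⟩ :
      deriv u r ≤ 0 ∧ 0 ≤ deriv (deriv u) r ∧ deriv (deriv (deriv u)) r ≤ 0 := by
    have hr' : r ∈ Ioc 0 (2 * l0) := Ioo_subset_Ioc_self hr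
    simp only [hu_def, deriv.fun_neg', deriv_const_mul_field']
    exact ⟨by nlinarith [hg1 r hr'], by nlinarith [hg2 r hr'], by nlinarith [hg3 r hr']⟩
  refine ⟨(hψ r hr).differentiableAt,
    (hψ'_smooth.contDiffAt (hU.mem_nhds hr)).differentiableAt (by norm_num),
    (hψ''_smooth.contDiffAt (hU.mem_nhds hr)).differentiableAt (by norm_num),
    (hψ'''_smooth.contDiffAt (hU.mem_nhds hr)).differentiableAt (by norm_num), ?_, ?_⟩
  · rw [hψ''.deriv hU hr]
    exact deriv_deriv_exp_comp_nonneg hU (hu.of_le (by norm_num)) hr hu2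
  · rw [(hψ''.deriv hU).deriv hU hr]
    exact deriv_deriv_deriv_exp_comp_nonpos hU hu hr hu1 hu2 hu3

/-- Lemma 4.1(2) of the paper: ψ is four times differentiable on (0, 2l0),
with ψ''' ≥ 0 and ψ'''' ≤ 0 there. -/
theorem stmt_1
    (l0 c1 c2 : ℝ) (hl0 : 0 < l0) (hc1 : 0 < c1) (hc2 : 0 < c2)
    (g ψ : ℝ → ℝ)
    (hg_cont : ContinuousOn g (Icc 0 (2 * l0)))
    (hg_smooth : ContDiffOn ℝ 3 g (Ioc 0 (2 * l0)))
    (hg0 : g 0 = 0)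
    (hg1 : ∀ r ∈ Ioc 0 (2 * l0), 0 ≤ deriv g r)
    (hg2 : ∀ r ∈ Ioc 0 (2 * l0), deriv (deriv g) r ≤ 0)
    (hg3 : ∀ r ∈ Ioc 0 (2 * l0), 0 ≤ deriv (deriv (deriv g)) r)
    (a b : ℝ)
    (ha : a = c1 + Real.exp (-(c2 * g (2 * l0))))
    (hb : b = -(c2 * deriv g (2 * l0) * Real.exp (-(c2 * g (2 * l0)))))
    (hψ1 : ∀ r ≤ 2 * l0, ψ r = c1 * r + ∫ s in (0:ℝ)..r, Real.exp (-(c2 * g s)))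
    (hψ2 : ∀ r, 2 * l0 < r →
      ψ r = ψ (2 * l0) + (a / 2) * ∫ s in (0:ℝ)..(r - 2 * l0), (1 + Real.exp ((2 * b / a) * s))) :
    ∀ r ∈ Ioo 0 (2 * l0),
      DifferentiableAt ℝ ψ r ∧ DifferentiableAt ℝ (deriv ψ) r ∧
      DifferentiableAt ℝ (deriv (deriv ψ)) r ∧
      DifferentiableAt ℝ (deriv (deriv (deriv ψ))) r ∧
      0 ≤ deriv (deriv (deriv ψ)) r ∧
      deriv (deriv (deriv (deriv ψ))) r ≤ 0 :=
  stmt_1_general l0 c1 c2 hc2 g ψ hg_cont hg_smooth hg1 hg2 hg3 hψ1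
end

section
/- Let ψ be the function defined in the context. Then for all real numbers δ and r with 0 ≤ δ ≤ r ≤ l0 and r > 0, one has ψ(r + δ) + ψ(r − δ) − 2 ψ(r) ≤ ψ''(r) δ². -/
/-!
The sign conditions on `g'`, `g''`, `g'''` make `ψ'' = -c₂ g' e^{-c₂ g}` concave on `(0, 2 l₀)`:
its second derivative is `-c₂ e^{-c₂ g} (g''' - 3 c₂ g' g'' + c₂² g'³) ≤ 0`. Concavity of `ψ''`
at the midpoint `r` of `r ± u` makes `u ↦ ψ'(r + u) - ψ'(r - u) - 2 ψ''(r) u` nonincreasing,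
hence nonpositive, and this is the derivative of `u ↦ ψ(r + u) + ψ(r - u) - 2 ψ(r) - ψ''(r) u²`,
which therefore stays below its value `0` at `u = 0`.
-/

open Set Filter MeasureTheory Real

theorem apply_le_apply_of_hasDerivAt_nonpos {F F' : ℝ → ℝ} {a b : ℝ} (hab : a ≤ b)
    (hF : ContinuousOn F (Icc a b)) (hF' : ∀ x ∈ Ioo a b, HasDerivAt F (F' x) x)
    (hF'_nonpos : ∀ x ∈ Ioo a b, F' x ≤ 0) : F b ≤ F a := by
  refine antitoneOn_of_hasDerivWithinAt_nonpos (f' := F') (convex_Icc a b) hF ?_ ?_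
    (left_mem_Icc.2 hab) (right_mem_Icc.2 hab) hab <;> rw [interior_Icc]
  · exact fun x hx => (hF' x hx).hasDerivWithinAt
  · exact hF'_nonpos

section SecondDifference

variable {f f' f'' : ℝ → ℝ} {r δ : ℝ}

theorem mem_Ioo_add_sub_of_mem_Ico {u : ℝ} (hu : u ∈ Ico 0 δ) :
    r + u ∈ Ioo (r - δ) (r + δ) ∧ r - u ∈ Ioo (r - δ) (r + δ) := by
  obtain ⟨hu0, huδ⟩ := hu
  exact ⟨⟨by linarith, by linarith⟩, ⟨by linarith, by linarith⟩⟩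

theorem sub_le_two_mul_mul_of_concaveOn
    (hf'' : ∀ x ∈ Ioo (r - δ) (r + δ), HasDerivAt f' (f'' x) x)
    (hconc : ConcaveOn ℝ (Ioo (r - δ) (r + δ)) f'') {t : ℝ} (ht : t ∈ Ico 0 δ) :
    f' (r + t) - f' (r - t) ≤ 2 * f'' r * t := by
  have hd : ∀ u ∈ Icc 0 t, HasDerivAt (fun u => f' (r + u) - f' (r - u) - 2 * f'' r * u)
      (f'' (r + u) + f'' (r - u) - 2 * f'' r) u := by
    intro u hu
    obtain ⟨hp, hm⟩ := mem_Ioo_add_sub_of_mem_Ico (r := r) ⟨hu.1, hu.2.trans_lt ht.2⟩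
    refine ((((hf'' _ hp).comp u ((hasDerivAt_id u).const_add r)).sub
      ((hf'' _ hm).comp u ((hasDerivAt_id u).const_sub r))).sub
      ((hasDerivAt_id u).const_mul (2 * f'' r))).congr_deriv ?_
    simp
  have hmid : ∀ u ∈ Ioo 0 t, f'' (r + u) + f'' (r - u) - 2 * f'' r ≤ 0 := by
    intro u hu
    obtain ⟨hp, hm⟩ := mem_Ioo_add_sub_of_mem_Ico (r := r) ⟨hu.1.le, hu.2.trans ht.2⟩
    have hconc_mid := hconc.2 hp hm (by norm_num : (0 : ℝ) ≤ 1 / 2)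
      (by norm_num : (0 : ℝ) ≤ 1 / 2) (by norm_num)
    rw [smul_eq_mul, smul_eq_mul, smul_eq_mul, smul_eq_mul,
      show 1 / 2 * (r + u) + 1 / 2 * (r - u) = r by ring] at hconc_mid
    linarith
  simpa using apply_le_apply_of_hasDerivAt_nonpos ht.1
    (fun u hu => (hd u hu).continuousAt.continuousWithinAt)
    (fun u hu => hd u (Ioo_subset_Icc_self hu)) hmid

theorem add_sub_two_mul_le_mul_sq_of_concaveOn (hδ : 0 ≤ δ)
    (hf : ContinuousOn f (Icc (r - δ) (r + δ)))
    (hf' : ∀ x ∈ Ioo (r - δ) (r + δ), HasDerivAt f (f' x) x)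
    (hf'' : ∀ x ∈ Ioo (r - δ) (r + δ), HasDerivAt f' (f'' x) x)
    (hconc : ConcaveOn ℝ (Ioo (r - δ) (r + δ)) f'') :
    f (r + δ) + f (r - δ) - 2 * f r ≤ f'' r * δ ^ 2 := by
  have hd : ∀ u ∈ Ioo 0 δ, HasDerivAt (fun u => f (r + u) + f (r - u) - f'' r * u ^ 2)
      (f' (r + u) - f' (r - u) - 2 * f'' r * u) u := by
    intro u hu
    obtain ⟨hp, hm⟩ := mem_Ioo_add_sub_of_mem_Ico (r := r) ⟨hu.1.le, hu.2⟩
    refine ((((hf' _ hp).comp u ((hasDerivAt_id u).const_add r)).add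
      ((hf' _ hm).comp u ((hasDerivAt_id u).const_sub r))).sub
      ((hasDerivAt_pow 2 u).const_mul (f'' r))).congr_deriv ?_
    simp only [mul_one, mul_neg, Nat.cast_ofNat, Nat.add_one_sub_one, pow_one]
    ring
  have hcont : ContinuousOn (fun u => f (r + u) + f (r - u) - f'' r * u ^ 2) (Icc 0 δ) := by
    refine ((hf.comp (by fun_prop) ?_).add (hf.comp (by fun_prop) ?_)).sub (by fun_prop) <;>
      intro u hu <;> constructor <;> linarith [hu.1, hu.2]
  have := apply_le_apply_of_hasDerivAt_nonpos hδ hcont hd fun u hu => by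
    linarith [sub_le_two_mul_mul_of_concaveOn hf'' hconc ⟨hu.1.le, hu.2⟩]
  simp only [add_zero, sub_zero] at this
  linarith

end SecondDifference

theorem ContDiffOn.hasDerivAt_deriv_of_isOpen {f : ℝ → ℝ} {U : Set ℝ} {n : WithTop ℕ∞}
    (hf : ContDiffOn ℝ n f U) (hU : IsOpen U) (hn : n ≠ 0) {x : ℝ} (hx : x ∈ U) :
    HasDerivAt f (deriv f x) x :=
  ((hf.differentiableOn hn).differentiableAt (hU.mem_nhds hx)).hasDerivAt

section ExpProfile

variable {g : ℝ → ℝ} {c : ℝ}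

theorem hasDerivAt_exp_neg_mul {g' x : ℝ} (hg : HasDerivAt g g' x) :
    HasDerivAt (fun y => exp (-(c * g y))) (-(c * g' * exp (-(c * g x)))) x := by
  refine ((hg.const_mul c).neg).exp.congr_deriv ?_
  simp only [Pi.neg_apply]
  ring

theorem concaveOn_neg_mul_deriv_mul_exp {U : Set ℝ} (hU : IsOpen U) (hUc : Convex ℝ U)
    (hc : 0 ≤ c) (hg : ContDiffOn ℝ 3 g U) (hg1 : ∀ x ∈ U, 0 ≤ deriv g x)
    (hg2 : ∀ x ∈ U, deriv (deriv g) x ≤ 0) (hg3 : ∀ x ∈ U, 0 ≤ deriv (deriv (deriv g)) x) :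
    ConcaveOn ℝ U (fun x => -(c * deriv g x * exp (-(c * g x)))) := by
  have hg' := hg.deriv_of_isOpen hU (m := 2) (by norm_num)
  have hg'' := hg'.deriv_of_isOpen hU (m := 1) (by norm_num)
  have d0 := fun x hx => hg.hasDerivAt_deriv_of_isOpen hU (by norm_num) (x := x) hx
  have d1 := fun x hx => hg'.hasDerivAt_deriv_of_isOpen hU (by norm_num) (x := x) hx
  have d2 := fun x hx => hg''.hasDerivAt_deriv_of_isOpen hU (by norm_num) (x := x) hx
  have D1 : ∀ x ∈ U, HasDerivAt (fun x => -(c * deriv g x * exp (-(c * g x))))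
      (-(c * exp (-(c * g x)) * (deriv (deriv g) x - c * deriv g x ^ 2))) x := by
    intro x hx
    refine (((d1 x hx).const_mul c).mul (hasDerivAt_exp_neg_mul (c := c) (d0 x hx))).neg
      |>.congr_deriv ?_
    ring
  have D2 : ∀ x ∈ U, HasDerivAt
      (fun x => -(c * exp (-(c * g x)) * (deriv (deriv g) x - c * deriv g x ^ 2)))
      (-(c * exp (-(c * g x)) * (deriv (deriv (deriv g)) x
        - 3 * c * deriv g x * deriv (deriv g) x + c ^ 2 * deriv g x ^ 3))) x := by
    intro x hx
    refine (((hasDerivAt_exp_neg_mul (c := c) (d0 x hx)).const_mul c).mul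
      ((d2 x hx).sub (((d1 x hx).pow 2).const_mul c))).neg |>.congr_deriv ?_
    simp only [Nat.cast_ofNat, Pi.sub_apply, Pi.pow_apply]
    ring
  refine concaveOn_of_hasDerivWithinAt2_nonpos hUc
    (fun x hx => (D1 x hx).continuousAt.continuousWithinAt)
    (fun x hx => (D1 x (hU.interior_eq ▸ hx)).hasDerivWithinAt)
    (fun x hx => (D2 x (hU.interior_eq ▸ hx)).hasDerivWithinAt) fun x hx => ?_
  rw [hU.interior_eq] at hx
  have hgg := mul_nonpos_of_nonneg_of_nonpos (mul_nonneg hc (hg1 x hx)) (hg2 x hx)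
  have hcube := mul_nonneg (sq_nonneg c) (pow_nonneg (hg1 x hx) 3)
  have hbracket : 0 ≤ deriv (deriv (deriv g)) x - 3 * c * deriv g x * deriv (deriv g) x
      + c ^ 2 * deriv g x ^ 3 := by nlinarith [hg3 x hx]
  have := mul_nonneg (mul_nonneg hc (exp_pos (-(c * g x))).le) hbracket
  linarith

end ExpProfile

section Primitive

variable {ψ φ : ℝ → ℝ} {c L : ℝ}

theorem continuousOn_of_eq_primitive (hφ : ContinuousOn φ (Icc 0 L))
    (hψ : ∀ y ≤ L, ψ y = c * y + ∫ s in (0 : ℝ)..y, φ s) : ContinuousOn ψ (Icc 0 L) := by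
  rcases le_total 0 L with hL | hL
  · have := intervalIntegral.continuousOn_primitive_interval (μ := volume) (a := 0) (b := L)
      (by rw [uIcc_of_le hL]; exact hφ.integrableOn_Icc)
    rw [uIcc_of_le hL] at this
    exact ((continuousOn_const.mul continuousOn_id).add this).congr fun y hy => hψ y hy.2
  · exact (subsingleton_Icc_of_ge hL).continuousOn ψ

theorem hasDerivAt_of_eq_primitive (hφ : ContinuousOn φ (Icc 0 L))
    (hψ : ∀ y ≤ L, ψ y = c * y + ∫ s in (0 : ℝ)..y, φ s) {x : ℝ} (hx : x ∈ Ioo 0 L) :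
    HasDerivAt ψ (c + φ x) x := by
  have hFTC := intervalIntegral.integral_hasDerivAt_right
    ((hφ.mono (Icc_subset_Icc le_rfl hx.2.le)).intervalIntegrable_of_Icc hx.1.le)
    ((hφ.mono Ioo_subset_Icc_self).stronglyMeasurableAtFilter isOpen_Ioo x hx)
    (hφ.continuousAt (Icc_mem_nhds hx.1 hx.2))
  refine (((hasDerivAt_id x).const_mul c).add hFTC).congr_of_eventuallyEq ?_
    |>.congr_deriv (by simp)
  filter_upwards [Iio_mem_nhds hx.2] with y hy using hψ y hy.le

end Primitive

theorem stmt_2_general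
    (l0 c1 c2 : ℝ) (hc2 : 0 < c2)
    (g ψ : ℝ → ℝ)
    (hg_cont : ContinuousOn g (Icc 0 (2 * l0)))
    (hg_smooth : ContDiffOn ℝ 3 g (Ioc 0 (2 * l0)))
    (hg1 : ∀ r ∈ Ioc 0 (2 * l0), 0 ≤ deriv g r)
    (hg2 : ∀ r ∈ Ioc 0 (2 * l0), deriv (deriv g) r ≤ 0)
    (hg3 : ∀ r ∈ Ioc 0 (2 * l0), 0 ≤ deriv (deriv (deriv g)) r)
    (hψ1 : ∀ r ≤ 2 * l0, ψ r = c1 * r + ∫ s in (0:ℝ)..r, Real.exp (-(c2 * g s))) :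
    ∀ δ r : ℝ, 0 ≤ δ → δ ≤ r → r ≤ l0 → 0 < r →
      ψ (r + δ) + ψ (r - δ) - 2 * ψ r ≤ deriv (deriv ψ) r * δ ^ 2 := by
  intro δ r hδ hδr hrl hr
  have hsub : Icc (r - δ) (r + δ) ⊆ Icc 0 (2 * l0) := Icc_subset_Icc (by linarith) (by linarith)
  have hsub' : Ioo (r - δ) (r + δ) ⊆ Ioo 0 (2 * l0) := Ioo_subset_Ioo (by linarith) (by linarith)
  have hr_mem : r ∈ Ioo 0 (2 * l0) := ⟨hr, by linarith⟩
  have hg : ContDiffOn ℝ 3 g (Ioo 0 (2 * l0)) := hg_smooth.mono Ioo_subset_Ioc_self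
  have hexp : ContinuousOn (fun s => exp (-(c2 * g s))) (Icc 0 (2 * l0)) := by fun_prop
  have hψ' := fun x (hx : x ∈ Ioo 0 (2 * l0)) => hasDerivAt_of_eq_primitive hexp hψ1 hx
  have hψ'' := fun x (hx : x ∈ Ioo 0 (2 * l0)) => (hasDerivAt_exp_neg_mul (c := c2)
    (hg.hasDerivAt_deriv_of_isOpen isOpen_Ioo (by norm_num) hx)).const_add c1
  have hψ''_r : deriv (deriv ψ) r = -(c2 * deriv g r * exp (-(c2 * g r))) := by
    rw [← (hψ'' r hr_mem).deriv]
    refine Filter.EventuallyEq.deriv_eq ?_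
    filter_upwards [isOpen_Ioo.mem_nhds hr_mem] with x hx using (hψ' x hx).deriv
  rw [hψ''_r]
  refine add_sub_two_mul_le_mul_sq_of_concaveOn hδ
    ((continuousOn_of_eq_primitive hexp hψ1).mono hsub) (fun x hx => hψ' x (hsub' hx))
    (fun x hx => hψ'' x (hsub' hx)) ((concaveOn_neg_mul_deriv_mul_exp isOpen_Ioo (convex_Ioo _ _)
      hc2.le hg ?_ ?_ ?_).subset hsub' (convex_Ioo _ _))
  · exact fun x hx => hg1 x (Ioo_subset_Ioc_self hx)
  · exact fun x hx => hg2 x (Ioo_subset_Ioc_self hx)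
  · exact fun x hx => hg3 x (Ioo_subset_Ioc_self hx)

/-- Lemma 4.1(2), second part: the second-difference bound
ψ(r+δ) + ψ(r−δ) − 2ψ(r) ≤ ψ''(r) δ² for 0 ≤ δ ≤ r ≤ l0. -/
theorem stmt_2
    (l0 c1 c2 : ℝ) (hl0 : 0 < l0) (hc1 : 0 < c1) (hc2 : 0 < c2)
    (g ψ : ℝ → ℝ)
    (hg_cont : ContinuousOn g (Icc 0 (2 * l0)))
    (hg_smooth : ContDiffOn ℝ 3 g (Ioc 0 (2 * l0)))
    (hg0 : g 0 = 0)
    (hg1 : ∀ r ∈ Ioc 0 (2 * l0), 0 ≤ deriv g r)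
    (hg2 : ∀ r ∈ Ioc 0 (2 * l0), deriv (deriv g) r ≤ 0)
    (hg3 : ∀ r ∈ Ioc 0 (2 * l0), 0 ≤ deriv (deriv (deriv g)) r)
    (a b : ℝ)
    (ha : a = c1 + Real.exp (-(c2 * g (2 * l0))))
    (hb : b = -(c2 * deriv g (2 * l0) * Real.exp (-(c2 * g (2 * l0)))))
    (hψ1 : ∀ r ≤ 2 * l0, ψ r = c1 * r + ∫ s in (0:ℝ)..r, Real.exp (-(c2 * g s)))
    (hψ2 : ∀ r, 2 * l0 < r →
      ψ r = ψ (2 * l0) + (a / 2) * ∫ s in (0:ℝ)..(r - 2 * l0), (1 + Real.exp ((2 * b / a) * s)))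
    (hψ' : ∀ r ∈ Ioc 0 (2 * l0), deriv ψ r = c1 + Real.exp (-(c2 * g r)))
    (hψ'' : ∀ r ∈ Ioc 0 (2 * l0),
      deriv (deriv ψ) r = -(c2 * deriv g r * Real.exp (-(c2 * g r)))) :
    ∀ δ r : ℝ, 0 ≤ δ → δ ≤ r → r ≤ l0 → 0 < r →
      ψ (r + δ) + ψ (r - δ) - 2 * ψ r ≤ deriv (deriv ψ) r * δ ^ 2 :=
  stmt_2_general l0 c1 c2 hc2 g ψ hg_cont hg_smooth hg1 hg2 hg3 hψ1
end

section
/- Let ψ be the function defined in the context. Then for every r ≥ 0 one has min{ c1, ψ(2l0)/(4 l0), a/4 } · r ≤ ψ(r) ≤ (1 + c1) r, where a = ψ'(2l0) = c1 + exp(−c2 g(2l0)). -/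
/-!
Since `g(0) = 0` and `g' ≥ 0`, `g ≥ 0` on `[0, 2 l0]`, so the integrand `exp(-c2 g)` of `ψ` lies
in `(0, 1]` there and `c1 r ≤ ψ r ≤ (1 + c1) r`. Beyond `2 l0` we have `b ≤ 0`, so the integrand
`1 + exp(2 b s / a)` lies in `[1, 2]` and `ψ` grows with slope between `a / 2` and `a ≤ 1 + c1`.
For the lower bound, `ψ(2 l0)` alone suffices up to `r = 4 l0`, and the slope `a / 2` after that.
-/

open Set MeasureTheory

theorem nonneg_of_deriv_nonneg_of_eq_zero {g : ℝ → ℝ} {L : ℝ} (hg : ContinuousOn g (Icc 0 L))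
    (hg' : DifferentiableOn ℝ g (Ioo 0 L)) (hderiv : ∀ x ∈ Ioo 0 L, 0 ≤ deriv g x)
    (hg0 : g 0 = 0) : ∀ s ∈ Icc 0 L, 0 ≤ g s := by
  intro s hs
  have hmono : MonotoneOn g (Icc 0 L) :=
    monotoneOn_of_deriv_nonneg (convex_Icc 0 L) hg (by rwa [interior_Icc])
      (by rwa [interior_Icc])
  exact hg0 ▸ hmono (left_mem_Icc.mpr (hs.1.trans hs.2)) hs hs.1

open intervalIntegral in
theorem intervalIntegral_mem_Icc_of_forall_mem_Icc {f : ℝ → ℝ} {m M r : ℝ} (hr : 0 ≤ r)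
    (hf : IntervalIntegrable f volume 0 r) (hfm : ∀ s ∈ Icc 0 r, f s ∈ Icc m M) :
    ∫ s in (0:ℝ)..r, f s ∈ Icc (m * r) (M * r) := by
  constructor
  · calc m * r = ∫ _ in (0:ℝ)..r, m := by simp [mul_comm]
      _ ≤ ∫ s in (0:ℝ)..r, f s :=
        integral_mono_on hr intervalIntegrable_const hf fun s hs => (hfm s hs).1
  · calc ∫ s in (0:ℝ)..r, f s ≤ ∫ _ in (0:ℝ)..r, M :=
          integral_mono_on hr hf intervalIntegrable_const fun s hs => (hfm s hs).2
      _ = M * r := by simp [mul_comm]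

theorem integral_exp_neg_mul_mem_Icc {g : ℝ → ℝ} {c r : ℝ} (hc : 0 ≤ c) (hr : 0 ≤ r)
    (hg : ContinuousOn g (Icc 0 r)) (hg_nonneg : ∀ s ∈ Icc 0 r, 0 ≤ g s) :
    ∫ s in (0:ℝ)..r, Real.exp (-(c * g s)) ∈ Icc 0 r := by
  have hint : IntervalIntegrable (fun s => Real.exp (-(c * g s))) volume 0 r :=
    (Real.continuous_exp.comp_continuousOn (continuousOn_const.mul hg).neg).intervalIntegrable_of_Icc
      hr
  simpa using intervalIntegral_mem_Icc_of_forall_mem_Icc (m := 0) (M := 1) hr hint fun s hs =>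
    ⟨(Real.exp_pos _).le,
      Real.exp_le_one_iff.mpr (neg_nonpos.mpr (mul_nonneg hc (hg_nonneg s hs)))⟩

theorem integral_one_add_exp_mul_mem_Icc {k t : ℝ} (hk : k ≤ 0) (ht : 0 ≤ t) :
    ∫ s in (0:ℝ)..t, (1 + Real.exp (k * s)) ∈ Icc t (2 * t) := by
  have hint : IntervalIntegrable (fun s => 1 + Real.exp (k * s)) volume 0 t := by
    apply Continuous.intervalIntegrable; fun_prop
  simpa using intervalIntegral_mem_Icc_of_forall_mem_Icc (m := 1) (M := 2) ht hint fun s hs =>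
    ⟨by linarith [Real.exp_pos (k * s)],
      by linarith [Real.exp_le_one_iff.mpr (mul_nonpos_of_nonpos_of_nonneg hk hs.1)]⟩

theorem mul_le_add_of_le_div_of_le_div {l0 P a t m : ℝ} (hl0 : 0 < l0) (hP : 0 ≤ P)
    (ha : 0 ≤ a) (ht : 0 ≤ t) (hmP : m ≤ P / (4 * l0)) (hma : m ≤ a / 4) :
    m * (2 * l0 + t) ≤ P + a / 2 * t := by
  have hr : 0 ≤ 2 * l0 + t := by linarith
  rcases le_or_gt t (2 * l0) with hle | hgt
  · calc m * (2 * l0 + t) ≤ P / (4 * l0) * (2 * l0 + t) := mul_le_mul_of_nonneg_right hmP hr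
      _ ≤ P / (4 * l0) * (4 * l0) := by gcongr; linarith
      _ = P := div_mul_cancel₀ P (by positivity)
      _ ≤ P + a / 2 * t := by nlinarith
  · calc m * (2 * l0 + t) ≤ a / 4 * (2 * l0 + t) := mul_le_mul_of_nonneg_right hma hr
      _ ≤ P + a / 2 * t := by nlinarith

theorem stmt_3_general
    (l0 c1 c2 : ℝ) (hl0 : 0 < l0) (hc1 : 0 < c1) (hc2 : 0 < c2)
    (g ψ : ℝ → ℝ)
    (hg_cont : ContinuousOn g (Icc 0 (2 * l0)))
    (hg_smooth : ContDiffOn ℝ 3 g (Ioc 0 (2 * l0)))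
    (hg0 : g 0 = 0)
    (hg1 : ∀ r ∈ Ioc 0 (2 * l0), 0 ≤ deriv g r)
    (a b : ℝ)
    (ha : a = c1 + Real.exp (-(c2 * g (2 * l0))))
    (hb : b = -(c2 * deriv g (2 * l0) * Real.exp (-(c2 * g (2 * l0)))))
    (hψ1 : ∀ r ≤ 2 * l0, ψ r = c1 * r + ∫ s in (0:ℝ)..r, Real.exp (-(c2 * g s)))
    (hψ2 : ∀ r, 2 * l0 < r →
      ψ r = ψ (2 * l0) + (a / 2) * ∫ s in (0:ℝ)..(r - 2 * l0), (1 + Real.exp ((2 * b / a) * s))) :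
    ∀ r : ℝ, 0 ≤ r →
      min (min c1 (ψ (2 * l0) / (4 * l0))) (a / 4) * r ≤ ψ r ∧ ψ r ≤ (1 + c1) * r := by
  have ha0 : 0 < a := by rw [ha]; positivity
  have hg_nonneg : ∀ s ∈ Icc 0 (2 * l0), 0 ≤ g s :=
    nonneg_of_deriv_nonneg_of_eq_zero hg_cont
      ((hg_smooth.differentiableOn (by norm_num)).mono Ioo_subset_Ioc_self)
      (fun x hx => hg1 x (Ioo_subset_Ioc_self hx)) hg0
  have hb0 : b ≤ 0 := by
    rw [hb, neg_nonpos]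
    have := hg1 (2 * l0) ⟨by linarith, le_rfl⟩
    positivity
  have hψ_inner : ∀ r ∈ Icc 0 (2 * l0), c1 * r ≤ ψ r ∧ ψ r ≤ (1 + c1) * r := by
    intro r hr
    have hsub : Icc 0 r ⊆ Icc 0 (2 * l0) := Icc_subset_Icc le_rfl hr.2
    have hI := integral_exp_neg_mul_mem_Icc hc2.le hr.1 (hg_cont.mono hsub)
      fun s hs => hg_nonneg s (hsub hs)
    rw [hψ1 r hr.2]
    constructor <;> linarith [hI.1, hI.2]
  intro r hr
  set m := min (min c1 (ψ (2 * l0) / (4 * l0))) (a / 4)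
  rcases le_or_gt r (2 * l0) with hr2 | hr2
  · have h := hψ_inner r ⟨hr, hr2⟩
    exact ⟨(mul_le_mul_of_nonneg_right ((min_le_left _ _).trans (min_le_left _ _)) hr).trans h.1,
      h.2⟩
  · have hP := hψ_inner (2 * l0) ⟨by linarith, le_rfl⟩
    have hJ := integral_one_add_exp_mul_mem_Icc (k := 2 * b / a)
      (div_nonpos_of_nonpos_of_nonneg (by linarith) ha0.le) (sub_nonneg.mpr hr2.le)
    have ha_le : a ≤ 1 + c1 := by
      have := Real.exp_le_one_iff.mpr
        (neg_nonpos.mpr (mul_nonneg hc2.le (hg_nonneg (2 * l0) ⟨by linarith, le_rfl⟩)))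
      linarith
    have hlower := mul_le_add_of_le_div_of_le_div (m := m) hl0 (by nlinarith [hP.1]) ha0.le
      (sub_nonneg.mpr hr2.le)
      ((min_le_left _ _).trans (min_le_right _ _)) (min_le_right _ _)
    rw [hψ2 r hr2]
    constructor
    · nlinarith [hJ.1]
    · nlinarith [hJ.2]

/-- Lemma 4.1(3) of the paper: min{c1, ψ(2l0)/(4l0), a/4} r ≤ ψ(r) ≤ (1+c1) r for r ≥ 0. -/
theorem stmt_3
    (l0 c1 c2 : ℝ) (hl0 : 0 < l0) (hc1 : 0 < c1) (hc2 : 0 < c2)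
    (g ψ : ℝ → ℝ)
    (hg_cont : ContinuousOn g (Icc 0 (2 * l0)))
    (hg_smooth : ContDiffOn ℝ 3 g (Ioc 0 (2 * l0)))
    (hg0 : g 0 = 0)
    (hg1 : ∀ r ∈ Ioc 0 (2 * l0), 0 ≤ deriv g r)
    (hg2 : ∀ r ∈ Ioc 0 (2 * l0), deriv (deriv g) r ≤ 0)
    (hg3 : ∀ r ∈ Ioc 0 (2 * l0), 0 ≤ deriv (deriv (deriv g)) r)
    (a b : ℝ)
    (ha : a = c1 + Real.exp (-(c2 * g (2 * l0))))
    (hb : b = -(c2 * deriv g (2 * l0) * Real.exp (-(c2 * g (2 * l0)))))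
    (hψ1 : ∀ r ≤ 2 * l0, ψ r = c1 * r + ∫ s in (0:ℝ)..r, Real.exp (-(c2 * g s)))
    (hψ2 : ∀ r, 2 * l0 < r →
      ψ r = ψ (2 * l0) + (a / 2) * ∫ s in (0:ℝ)..(r - 2 * l0), (1 + Real.exp ((2 * b / a) * s))) :
    ∀ r : ℝ, 0 ≤ r →
      min (min c1 (ψ (2 * l0) / (4 * l0))) (a / 4) * r ≤ ψ r ∧ ψ r ≤ (1 + c1) * r :=
  stmt_3_general l0 c1 c2 hl0 hc1 hc2 g ψ hg_cont hg_smooth hg0 hg1 a b ha hb hψ1 hψ2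
end

section
/- Let g be the function defined in the context. Then g is continuous on [0, 2l0] and three times continuously differentiable on (0, 2l0], g(0) = 0, and for every r ∈ (0, 2l0] one has g'(r) ≥ 0, g''(r) ≤ 0 and g'''(r) ≥ 0. -/
open Set Filter MeasureTheory

open scoped Topology

/-!
On `(0, 2 l0)` one has `g'(r) = Ψ(r) r^(θ-2)` with `Ψ(r) = θ r + c0 Φ₁(r)`, and `Ψ` inherits the
hypotheses on `Φ₁`: it vanishes at `0`, is nonnegative, concave, and has nondecreasing `Ψ''`.
Concavity and `Ψ(0) = 0` give `r Ψ'(r) ≤ Ψ(r)`; monotonicity of `Ψ''` gives the Taylor bound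
`2 r Ψ'(r) ≤ 2 Ψ(r) + r² Ψ''(r)`. Since `θ - 2 ≤ -1`, these two inequalities make
`Ψ(r) r^(θ-2)` nonincreasing and convex. At the endpoint `2 l0` the two-sided derivatives, where
they exist, inherit the signs through monotonicity on `(0, 2 l0]`.
-/

theorem hasDerivWithinAt_primitive_Ioc {f : ℝ → ℝ} {a b x : ℝ}
    (hf : IntervalIntegrable f volume a b) (hcont : ContinuousOn f (Ioc a b)) (hx : x ∈ Ioc a b) :
    HasDerivWithinAt (fun u => ∫ t in a..u, f t) (f x) (Ioc a b) x := by
  have : Fact (x ∈ Icc a b) := ⟨Ioc_subset_Icc_self hx⟩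
  have hmem : Ioc a b ∈ 𝓝[Icc a b] x :=
    mem_nhdsWithin.2 ⟨Ioi a, isOpen_Ioi, hx.1, fun y hy => ⟨hy.1, hy.2.2⟩⟩
  exact (intervalIntegral.integral_hasDerivWithinAt_right
    (hf.mono_set (uIcc_subset_uIcc_left (Icc_subset_uIcc (Ioc_subset_Icc_self hx))))
    ⟨Ioc a b, hmem, hcont.aestronglyMeasurable measurableSet_Ioc⟩
    ((hcont x hx).mono_of_mem_nhdsWithin hmem)).mono Ioc_subset_Icc_self

theorem contDiffOn_succ_of_hasDerivWithinAt {F f : ℝ → ℝ} {s : Set ℝ} {n : ℕ}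
    (hs : UniqueDiffOn ℝ s) (hF : ∀ x ∈ s, HasDerivWithinAt F (f x) s x)
    (hf : ContDiffOn ℝ n f s) : ContDiffOn ℝ (n + 1) F s :=
  (contDiffOn_succ_iff_derivWithin hs).2
    ⟨fun x hx => (hF x hx).differentiableWithinAt, by simp,
      hf.congr fun x hx => (hF x hx).derivWithin (hs x hx)⟩

theorem deriv_right_endpoint_nonneg {F : ℝ → ℝ} {a b : ℝ} (hab : a < b)
    (hF : DifferentiableOn ℝ F (Ioo a b)) (h : ∀ x ∈ Ioo a b, 0 ≤ deriv F x) :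
    0 ≤ deriv F b := by
  by_cases hb : DifferentiableAt ℝ F b
  swap
  · rw [deriv_zero_of_not_differentiableAt hb]
  have hcont : ContinuousOn F (Ioc a b) := fun x hx => by
    rcases hx.2.eq_or_lt with rfl | hxb
    · exact hb.continuousAt.continuousWithinAt
    · exact (hF.differentiableAt (Ioo_mem_nhds hx.1 hxb)).continuousAt.continuousWithinAt
  have hmono : MonotoneOn F (Ioc a b) :=
    monotoneOn_of_deriv_nonneg (convex_Ioc a b) hcont (by rwa [interior_Ioc])
      (by rwa [interior_Ioc])
  rw [← hb.derivWithin (uniqueDiffOn_Ioc a b b (right_mem_Ioc.2 hab))]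
  exact hmono.derivWithin_nonneg

theorem deriv_right_endpoint_nonpos {F : ℝ → ℝ} {a b : ℝ} (hab : a < b)
    (hF : DifferentiableOn ℝ F (Ioo a b)) (h : ∀ x ∈ Ioo a b, deriv F x ≤ 0) :
    deriv F b ≤ 0 := by
  have := deriv_right_endpoint_nonneg hab hF.neg fun x hx => by
    rw [deriv.neg]; exact neg_nonneg.2 (h x hx)
  rwa [deriv.neg, neg_nonneg] at this

theorem deriv_signs_Ioc_of_Ioo {F : ℝ → ℝ} {a b : ℝ} (hF : ContDiffOn ℝ 3 F (Ioo a b))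
    (h : ∀ x ∈ Ioo a b,
      0 ≤ deriv F x ∧ deriv (deriv F) x ≤ 0 ∧ 0 ≤ deriv (deriv (deriv F)) x) :
    ∀ x ∈ Ioc a b, 0 ≤ deriv F x ∧ deriv (deriv F) x ≤ 0 ∧ 0 ≤ deriv (deriv (deriv F)) x := by
  intro x hx
  rcases hx.2.eq_or_lt with rfl | hxb
  · have hF' := hF.deriv_of_isOpen isOpen_Ioo (m := 2) (by norm_num)
    have hF'' := hF'.deriv_of_isOpen isOpen_Ioo (m := 1) (by norm_num)
    exact ⟨deriv_right_endpoint_nonneg hx.1 (hF.differentiableOn (by norm_num)) fun y hy =>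
        (h y hy).1,
      deriv_right_endpoint_nonpos hx.1 (hF'.differentiableOn (by norm_num)) fun y hy =>
        (h y hy).2.1,
      deriv_right_endpoint_nonneg hx.1 (hF''.differentiableOn one_ne_zero) fun y hy =>
        (h y hy).2.2⟩
  · exact h x ⟨hx.1, hxb⟩

theorem mul_le_of_antitoneOn_deriv {f f' : ℝ → ℝ} {x : ℝ} (hx : 0 < x) (hf0 : f 0 = 0)
    (hcont : ContinuousOn f (Icc 0 x)) (hf : ∀ y ∈ Ioo 0 x, HasDerivAt f (f' y) y)
    (hanti : AntitoneOn f' (Ioc 0 x)) : x * f' x ≤ f x := by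
  have hmono : MonotoneOn (fun y => f y - y * f' x) (Icc 0 x) := by
    refine monotoneOn_of_hasDerivWithinAt_nonneg (f' := fun y => f' y - f' x) (convex_Icc 0 x)
      (hcont.sub (continuousOn_id.mul continuousOn_const)) (fun y hy => ?_) (fun y hy => ?_)
    · rw [interior_Icc] at hy ⊢
      exact ((hf y hy).sub (hasDerivAt_mul_const (f' x))).hasDerivWithinAt
    · rw [interior_Icc] at hy
      exact sub_nonneg.2 (hanti ⟨hy.1, hy.2.le⟩ ⟨hx, le_rfl⟩ hy.2.le)
  simpa [hf0] using hmono (left_mem_Icc.2 hx.le) (right_mem_Icc.2 hx.le) hx.le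

theorem two_mul_mul_le_of_monotoneOn_deriv {f f' f'' : ℝ → ℝ} {x : ℝ} (hx : 0 < x)
    (hf : ∀ y ∈ Ioc 0 x, HasDerivAt f (f' y) y) (hf' : ∀ y ∈ Ioc 0 x, HasDerivAt f' (f'' y) y)
    (hmono : MonotoneOn f'' (Ioc 0 x)) (htangent : ∀ y ∈ Ioc 0 x, y * f' y ≤ f y) :
    2 * (x * f' x) ≤ 2 * f x + x ^ 2 * f'' x := by
  set h := fun y => f y - y * f' y + y ^ 2 * f'' x / 2
  have hderiv : ∀ y ∈ Ioc 0 x, HasDerivAt h (y * (f'' x - f'' y)) y := fun y hy => by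
    refine (((hf y hy).sub ((hasDerivAt_id y).mul (hf' y hy))).add
      (((hasDerivAt_pow 2 y).mul_const (f'' x)).div_const 2)).congr_deriv ?_
    simp only [id_eq]
    ring
  have hh : MonotoneOn h (Ioc 0 x) := by
    refine monotoneOn_of_hasDerivWithinAt_nonneg (f' := fun y => y * (f'' x - f'' y))
      (convex_Ioc 0 x) (fun y hy => (hderiv y hy).continuousAt.continuousWithinAt)
      (fun y hy => ?_) (fun y hy => ?_)
    · rw [interior_Ioc] at hy ⊢
      exact (hderiv y (Ioo_subset_Ioc_self hy)).hasDerivWithinAt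
    · rw [interior_Ioc] at hy
      exact mul_nonneg hy.1.le
        (sub_nonneg.2 (hmono (Ioo_subset_Ioc_self hy) (right_mem_Ioc.2 hx) hy.2.le))
  -- `y ^ 2 * f'' x / 2 ≤ h y ≤ h x` on `(0, x]`; let `y → 0⁺`.
  have hlim : Tendsto (fun y : ℝ => y ^ 2 * f'' x / 2) (𝓝[>] 0) (𝓝 0) :=
    tendsto_nhdsWithin_of_tendsto_nhds (Continuous.tendsto' (by fun_prop) _ _ (by simp))
  have : 0 ≤ h x := le_of_tendsto hlim <| eventually_of_mem (Ioc_mem_nhdsGT hx) fun y hy =>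
    (show y ^ 2 * f'' x / 2 ≤ h y by simp only [h]; linarith [htangent y hy]).trans
      (hh hy (right_mem_Ioc.2 hx) hy.2)
  simp only [h] at this
  linarith

section PowerWeight

variable {f f' f'' f''' : ℝ → ℝ} {b q x : ℝ}

theorem deriv_mul_rpow_nonpos (hq : q ≤ -1) (hx : 0 < x) (hf : HasDerivAt f (f' x) x)
    (hnn : 0 ≤ f x) (htangent : x * f' x ≤ f x) : deriv (fun r => f r * r ^ q) x ≤ 0 := by
  have hd : HasDerivAt (fun r => f r * r ^ q) (f' x * x ^ q + f x * (q * x ^ (q - 1))) x :=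
    hf.mul (Real.hasDerivAt_rpow_const (Or.inl hx.ne'))
  rw [hd.deriv, Real.rpow_sub_one hx.ne']
  have hfactor : f' x * x ^ q + f x * (q * (x ^ q / x)) = x ^ q / x * (x * f' x + q * f x) := by
    field_simp
  rw [hfactor]
  exact mul_nonpos_of_nonneg_of_nonpos (by positivity) (by nlinarith)

theorem deriv_deriv_mul_rpow_nonneg (hq : q ≤ -1) (hf : ∀ y ∈ Ioo 0 b, HasDerivAt f (f' y) y)
    (hf' : ∀ y ∈ Ioo 0 b, HasDerivAt f' (f'' y) y) (hx : x ∈ Ioo 0 b) (hnn : 0 ≤ f x)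
    (htangent : x * f' x ≤ f x) (htaylor : 2 * (x * f' x) ≤ 2 * f x + x ^ 2 * f'' x) :
    0 ≤ deriv (deriv fun r => f r * r ^ q) x := by
  have hpow : ∀ y ∈ Ioo 0 b, ∀ p : ℝ, HasDerivAt (fun r => r ^ p) (p * y ^ (p - 1)) y :=
    fun y hy p => Real.hasDerivAt_rpow_const (Or.inl hy.1.ne')
  have hd : EqOn (deriv fun r => f r * r ^ q) (fun r => f' r * r ^ q + f r * (q * r ^ (q - 1)))
      (Ioo 0 b) := fun y hy => ((hf y hy).mul (hpow y hy q)).deriv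
  have hd' : HasDerivAt (fun r => f' r * r ^ q + f r * (q * r ^ (q - 1)))
      (f'' x * x ^ q + f' x * (q * x ^ (q - 1)) +
        (f' x * (q * x ^ (q - 1)) + f x * (q * ((q - 1) * x ^ (q - 1 - 1))))) x :=
    ((hf' x hx).mul (hpow x hx q)).add ((hf x hx).mul ((hpow x hx (q - 1)).const_mul q))
  rw [hd.deriv isOpen_Ioo hx, hd'.deriv, Real.rpow_sub_one hx.1.ne' (q - 1),
    Real.rpow_sub_one hx.1.ne' q]
  -- By `htaylor` the bracket is at least `(1 + q) * (2 * x * f' x + (q - 2) * f x)`,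
  -- a product of two nonpositive factors by `hq` and `htangent`.
  have hbracket : 0 ≤ x ^ 2 * f'' x + 2 * q * (x * f' x) + q * (q - 1) * f x := by
    nlinarith [mul_nonneg (by linarith : 0 ≤ -(1 + q))
      (by nlinarith : 0 ≤ -(2 * (x * f' x) + (q - 2) * f x))]
  have hfactor : f'' x * x ^ q + f' x * (q * (x ^ q / x)) +
      (f' x * (q * (x ^ q / x)) + f x * (q * ((q - 1) * (x ^ q / x / x)))) =
      x ^ q / x ^ 2 * (x ^ 2 * f'' x + 2 * q * (x * f' x) + q * (q - 1) * f x) := by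
    have := hx.1.ne'
    field_simp
    ring
  rw [hfactor]
  exact mul_nonneg (by have := hx.1; positivity) hbracket

theorem mul_rpow_deriv_signs (hq : q ≤ -1) (hf0 : f 0 = 0) (hcont : ContinuousOn f (Icc 0 b))
    (hnn : ∀ y ∈ Ioo 0 b, 0 ≤ f y) (hf : ∀ y ∈ Ioo 0 b, HasDerivAt f (f' y) y)
    (hf' : ∀ y ∈ Ioo 0 b, HasDerivAt f' (f'' y) y)
    (hf'' : ∀ y ∈ Ioo 0 b, HasDerivAt f'' (f''' y) y)
    (hf''_nonpos : ∀ y ∈ Ioo 0 b, f'' y ≤ 0) (hf'''_nonneg : ∀ y ∈ Ioo 0 b, 0 ≤ f''' y)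
    (hx : x ∈ Ioo 0 b) :
    0 ≤ f x * x ^ q ∧ deriv (fun r => f r * r ^ q) x ≤ 0 ∧
      0 ≤ deriv (deriv fun r => f r * r ^ q) x := by
  have hanti : AntitoneOn f' (Ioo 0 b) :=
    antitoneOn_of_hasDerivWithinAt_nonpos (convex_Ioo 0 b)
      (fun y hy => (hf' y hy).continuousAt.continuousWithinAt)
      (by simpa only [interior_Ioo] using fun y hy => (hf' y hy).hasDerivWithinAt)
      (by rwa [interior_Ioo])
  have hmono : MonotoneOn f'' (Ioo 0 b) :=
    monotoneOn_of_hasDerivWithinAt_nonneg (convex_Ioo 0 b)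
      (fun y hy => (hf'' y hy).continuousAt.continuousWithinAt)
      (by simpa only [interior_Ioo] using fun y hy => (hf'' y hy).hasDerivWithinAt)
      (by rwa [interior_Ioo])
  have htangent : ∀ y ∈ Ioo 0 b, y * f' y ≤ f y := fun y hy =>
    mul_le_of_antitoneOn_deriv hy.1 hf0 (hcont.mono (Icc_subset_Icc_right hy.2.le))
      (fun z hz => hf z ⟨hz.1, hz.2.trans hy.2⟩) (hanti.mono (Ioc_subset_Ioo_right hy.2))
  have hsub : Ioc 0 x ⊆ Ioo 0 b := Ioc_subset_Ioo_right hx.2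
  have htaylor := two_mul_mul_le_of_monotoneOn_deriv hx.1 (fun y hy => hf y (hsub hy))
    (fun y hy => hf' y (hsub hy)) (hmono.mono hsub) (fun y hy => htangent y (hsub hy))
  exact ⟨mul_nonneg (hnn x hx) (Real.rpow_nonneg hx.1.le q),
    deriv_mul_rpow_nonpos hq hx.1 (hf x hx) (hnn x hx) (htangent x hx),
    deriv_deriv_mul_rpow_nonneg hq hf hf' hx (hnn x hx) (htangent x hx) htaylor⟩

end PowerWeight

theorem hasDerivWithinAt_rpow_add_primitive {Φ : ℝ → ℝ} {θ c0 b x : ℝ}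
    (hΦcont : ContinuousOn Φ (Ioc 0 b))
    (hint : IntervalIntegrable (fun z => Φ z * z ^ (θ - 2)) volume 0 b) (hx : x ∈ Ioc 0 b) :
    HasDerivWithinAt (fun r => r ^ θ + c0 * ∫ z in (0:ℝ)..r, Φ z * z ^ (θ - 2))
      ((θ * x + c0 * Φ x) * x ^ (θ - 2)) (Ioc 0 b) x := by
  have hφ : ContinuousOn (fun z => Φ z * z ^ (θ - 2)) (Ioc 0 b) := hΦcont.mul fun z hz =>
    (Real.continuousAt_rpow_const z _ (Or.inl hz.1.ne')).continuousWithinAt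
  refine ((Real.hasDerivAt_rpow_const (Or.inl hx.1.ne')).hasDerivWithinAt.add
    ((hasDerivWithinAt_primitive_Ioc hint hφ hx).const_mul c0)).congr_deriv ?_
  rw [show θ - 1 = θ - 2 + 1 by ring, Real.rpow_add_one hx.1.ne']
  ring

theorem deriv_signs_of_hasDerivAt_mul_rpow {Φ g : ℝ → ℝ} {θ c0 b x : ℝ}
    (hθ : θ ∈ Ioc (0:ℝ) 1) (hc0 : 0 ≤ c0) (hΦnn : ∀ r ∈ Ioo 0 b, 0 ≤ Φ r)
    (hΦcont : ContinuousOn Φ (Icc 0 b))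
    (hΦsmooth : ContDiffOn ℝ 3 Φ (Ioo 0 b)) (hΦ0 : Φ 0 = 0)
    (hΦ2 : ∀ r ∈ Ioo 0 b, deriv (deriv Φ) r ≤ 0)
    (hΦ3 : ∀ r ∈ Ioo 0 b, 0 ≤ deriv (deriv (deriv Φ)) r)
    (hg : ∀ r ∈ Ioo 0 b, HasDerivAt g ((θ * r + c0 * Φ r) * r ^ (θ - 2)) r)
    (hx : x ∈ Ioo 0 b) :
    0 ≤ deriv g x ∧ deriv (deriv g) x ≤ 0 ∧ 0 ≤ deriv (deriv (deriv g)) x := by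
  have hΦ' := hΦsmooth.deriv_of_isOpen isOpen_Ioo (m := 2) (by norm_num)
  have hΦ'' := hΦ'.deriv_of_isOpen isOpen_Ioo (m := 1) (by norm_num)
  have hnhds : ∀ r ∈ Ioo 0 b, Ioo 0 b ∈ 𝓝 r := fun r hr => isOpen_Ioo.mem_nhds hr
  obtain ⟨h1, h2, h3⟩ := mul_rpow_deriv_signs (q := θ - 2) (f := fun r => θ * r + c0 * Φ r)
    (f' := fun r => θ + c0 * deriv Φ r) (f'' := fun r => c0 * deriv (deriv Φ) r)
    (f''' := fun r => c0 * deriv (deriv (deriv Φ)) r) (by linarith [hθ.2]) (by simp [hΦ0])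
    ((continuousOn_const.mul continuousOn_id).add (continuousOn_const.mul hΦcont))
    (fun r hr => add_nonneg (mul_nonneg hθ.1.le hr.1.le) (mul_nonneg hc0 (hΦnn r hr)))
    (fun r hr => (((hasDerivAt_id r).const_mul θ).add
      (((hΦsmooth.differentiableOn (by norm_num)).hasDerivAt (hnhds r hr)).const_mul
        c0)).congr_deriv (by simp))
    (fun r hr => (((hΦ'.differentiableOn (by norm_num)).hasDerivAt (hnhds r hr)).const_mul
      c0).const_add θ)
    (fun r hr => ((hΦ''.differentiableOn one_ne_zero).hasDerivAt (hnhds r hr)).const_mul c0)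
    (fun r hr => mul_nonpos_of_nonneg_of_nonpos hc0 (hΦ2 r hr))
    (fun r hr => mul_nonneg hc0 (hΦ3 r hr)) hx
  have hEq : EqOn (deriv g) (fun r => (θ * r + c0 * Φ r) * r ^ (θ - 2)) (Ioo 0 b) :=
    fun r hr => (hg r hr).deriv
  exact ⟨hEq hx ▸ h1, hEq.deriv isOpen_Ioo hx ▸ h2,
    (hEq.deriv isOpen_Ioo).deriv isOpen_Ioo hx ▸ h3⟩

theorem stmt_6_general
    (l0 θ c0 : ℝ) (hθ : θ ∈ Ioc (0:ℝ) 1) (hc0 : 0 < c0)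
    (Φ₁ : ℝ → ℝ)
    (hΦnn : ∀ r ∈ Icc 0 (2 * l0), 0 ≤ Φ₁ r)
    (hΦcont : ContinuousOn Φ₁ (Icc 0 (2 * l0)))
    (hΦsmooth : ContDiffOn ℝ 3 Φ₁ (Ioc 0 (2 * l0)))
    (hΦ0 : Φ₁ 0 = 0)
    (hΦ2 : ∀ r ∈ Ioc 0 (2 * l0), deriv (deriv Φ₁) r ≤ 0)
    (hΦ3 : ∀ r ∈ Ioc 0 (2 * l0), 0 ≤ deriv (deriv (deriv Φ₁)) r)
    (hint : IntervalIntegrable (fun z => Φ₁ z * z ^ (θ - 2)) volume 0 (2 * l0))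
    (g : ℝ → ℝ)
    (hg : ∀ r, g r = r ^ θ + c0 * ∫ z in (0:ℝ)..r, Φ₁ z * z ^ (θ - 2)) :
    ContinuousOn g (Icc 0 (2 * l0)) ∧ ContDiffOn ℝ 3 g (Ioc 0 (2 * l0)) ∧ g 0 = 0 ∧
      ∀ r ∈ Ioc 0 (2 * l0),
        0 ≤ deriv g r ∧ deriv (deriv g) r ≤ 0 ∧ 0 ≤ deriv (deriv (deriv g)) r := by
  obtain rfl : g = fun r => r ^ θ + c0 * ∫ z in (0:ℝ)..r, Φ₁ z * z ^ (θ - 2) := funext hg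
  have hgd := fun x (hx : x ∈ Ioc 0 (2 * l0)) =>
    hasDerivWithinAt_rpow_add_primitive (c0 := c0) (hΦcont.mono Ioc_subset_Icc_self) hint hx
  have hC3 : ContDiffOn ℝ 3 _ (Ioc 0 (2 * l0)) :=
    contDiffOn_succ_of_hasDerivWithinAt (n := 2) (uniqueDiffOn_Ioc _ _) hgd
      (((contDiffOn_const.mul contDiffOn_id).add (contDiffOn_const.mul
        (hΦsmooth.of_le (by norm_num)))).mul fun x hx =>
          (Real.contDiffAt_rpow_const_of_ne hx.1.ne').contDiffWithinAt)
  have hsigns := fun x (hx : x ∈ Ioo 0 (2 * l0)) =>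
    deriv_signs_of_hasDerivAt_mul_rpow hθ hc0.le (fun r hr => hΦnn r (Ioo_subset_Icc_self hr))
      hΦcont (hΦsmooth.mono Ioo_subset_Ioc_self) hΦ0
      (fun r hr => hΦ2 r (Ioo_subset_Ioc_self hr)) (fun r hr => hΦ3 r (Ioo_subset_Ioc_self hr))
      (fun r hr => (hgd r (Ioo_subset_Ioc_self hr)).hasDerivAt (Ioc_mem_nhds hr.1 hr.2)) hx
  refine ⟨(Real.continuous_rpow_const hθ.1.le).continuousOn.add (continuousOn_const.mul
    ((intervalIntegral.continuousOn_primitive_interval' hint left_mem_uIcc).mono Icc_subset_uIcc)),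
    hC3, by simp [hθ.1.ne'], deriv_signs_Ioc_of_Ioo (hC3.mono Ioo_subset_Ioc_self) hsigns⟩

/-- Lemma 4.2 of the paper, first assertion: g(r) = r^θ + c0 ∫₀^r Φ₁(z) z^{θ−2} dz is
continuous on [0,2l0], C³ on (0,2l0], g(0)=0, and g' ≥ 0, g'' ≤ 0, g''' ≥ 0 on (0,2l0]. -/
theorem stmt_6
    (l0 θ c0 : ℝ) (hl0 : 0 < l0) (hθ : θ ∈ Ioc (0:ℝ) 1) (hc0 : 0 < c0)
    (Φ₁ : ℝ → ℝ)
    (hΦnn : ∀ r ∈ Icc 0 (2 * l0), 0 ≤ Φ₁ r)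
    (hΦcont : ContinuousOn Φ₁ (Icc 0 (2 * l0)))
    (hΦsmooth : ContDiffOn ℝ 3 Φ₁ (Ioc 0 (2 * l0)))
    (hΦ0 : Φ₁ 0 = 0)
    (hΦ1 : ∀ r ∈ Ioc 0 (2 * l0), 0 ≤ deriv Φ₁ r)
    (hΦ2 : ∀ r ∈ Ioc 0 (2 * l0), deriv (deriv Φ₁) r ≤ 0)
    (hΦ3 : ∀ r ∈ Ioc 0 (2 * l0), 0 ≤ deriv (deriv (deriv Φ₁)) r)
    (hint : IntervalIntegrable (fun z => Φ₁ z * z ^ (θ - 2)) volume 0 (2 * l0))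
    (g : ℝ → ℝ)
    (hg : ∀ r, g r = r ^ θ + c0 * ∫ z in (0:ℝ)..r, Φ₁ z * z ^ (θ - 2)) :
    ContinuousOn g (Icc 0 (2 * l0)) ∧ ContDiffOn ℝ 3 g (Ioc 0 (2 * l0)) ∧ g 0 = 0 ∧
      ∀ r ∈ Ioc 0 (2 * l0),
        0 ≤ deriv g r ∧ deriv (deriv g) r ≤ 0 ∧ 0 ≤ deriv (deriv (deriv g)) r :=
  stmt_6_general l0 θ c0 hθ hc0 Φ₁ hΦnn hΦcont hΦsmooth hΦ0 hΦ2 hΦ3 hint g hg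
end

section
/- Let g be the function defined in the context. Then for every r ∈ (0, 2l0] one has g'(r) > 0, r g'(r) ≤ g(2l0), and −r g''(r) ≤ (2 − θ) g'(r). In particular, sup over r ∈ (0, 2l0] of ( r g'(r) − r g''(r)/g'(r) ) is at most g(2l0) + (2 − θ), and hence is finite. -/
/-!
`r g'(r) = θ r^θ + c₀ Φ₁(r) r^(θ-1)`, and concavity of `Φ₁` with `Φ₁ 0 = 0` gives the chord bound
`Φ₁ z ≥ (z / r) Φ₁ r`, whence `Φ₁(r) r^(θ-1) / θ ≤ ∫₀^r Φ₁ z z^(θ-2) dz`; since `θ ≤ 1` this bounds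
`r g'(r)` by `g(2l₀)`. Writing `g'(x) = x^(θ-2) ψ(x)` with `ψ(x) = θ x + c₀ Φ₁(x)`, one gets
`r g''(r) = (θ - 2) g'(r) + r^(θ-1) ψ'(r)` and `ψ' ≥ 0` because `Φ₁` is nondecreasing.
-/

open Set Filter MeasureTheory Topology

lemma ConcaveOn.smul_map_le_map_smul {E : Type*} [AddCommGroup E] [Module ℝ E] {s : Set E}
    {f : E → ℝ} (hf : ConcaveOn ℝ s f) (h0 : (0 : E) ∈ s) (hf0 : f 0 = 0) {x : E} (hx : x ∈ s)
    {a : ℝ} (ha0 : 0 ≤ a) (ha1 : a ≤ 1) : a • f x ≤ f (a • x) := by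
  simpa [hf0] using hf.2 h0 hx (sub_nonneg.2 ha1) ha0 (sub_add_cancel 1 a)

lemma div_mul_rpow_le_integral_mul_rpow {f : ℝ → ℝ} {θ r : ℝ} (hθ : 0 < θ) (hr : 0 < r)
    (hf : ConcaveOn ℝ (Icc 0 r) f) (hf0 : f 0 = 0)
    (hint : IntervalIntegrable (fun z => f z * z ^ (θ - 2)) volume 0 r) :
    f r * r ^ (θ - 1) / θ ≤ ∫ z in (0 : ℝ)..r, f z * z ^ (θ - 2) := by
  have hchord : ∀ z ∈ Ioo 0 r, f r / r * z ^ (θ - 1) ≤ f z * z ^ (θ - 2) := by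
    intro z hz
    have hzr : z / r * f r ≤ f z := by
      simpa [div_mul_cancel₀ z hr.ne'] using hf.smul_map_le_map_smul
        (left_mem_Icc.2 hr.le) hf0 (right_mem_Icc.2 hr.le) (div_nonneg hz.1.le hr.le)
        ((div_le_one hr).2 hz.2.le)
    calc f r / r * z ^ (θ - 1) = z / r * f r * z ^ (θ - 2) := by
          rw [show θ - 1 = θ - 2 + 1 by ring, Real.rpow_add_one hz.1.ne']; ring
      _ ≤ f z * z ^ (θ - 2) := mul_le_mul_of_nonneg_right hzr (Real.rpow_nonneg hz.1.le _)
  calc f r * r ^ (θ - 1) / θ = ∫ z in (0 : ℝ)..r, f r / r * z ^ (θ - 1) := by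
        rw [intervalIntegral.integral_const_mul, integral_rpow (Or.inl (by linarith)),
          sub_add_cancel, Real.zero_rpow hθ.ne', sub_zero, Real.rpow_sub_one hr.ne']
        field_simp
    _ ≤ ∫ z in (0 : ℝ)..r, f z * z ^ (θ - 2) :=
        intervalIntegral.integral_mono_on_of_le_Ioo hr.le
          ((intervalIntegral.intervalIntegrable_rpow' (by linarith)).const_mul _) hint hchord

lemma mul_rpow_add_le_rpow_add_integral {f : ℝ → ℝ} {θ c b r : ℝ} (hθ : θ ∈ Ioc 0 1)
    (hc : 0 ≤ c) (hr : r ∈ Ioc 0 b) (hf : ConcaveOn ℝ (Icc 0 b) f) (hf0 : f 0 = 0)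
    (hfnn : ∀ z ∈ Icc 0 b, 0 ≤ f z)
    (hint : IntervalIntegrable (fun z => f z * z ^ (θ - 2)) volume 0 b) :
    r * (θ * r ^ (θ - 1) + c * f r * r ^ (θ - 2)) ≤
      b ^ θ + c * ∫ z in (0 : ℝ)..b, f z * z ^ (θ - 2) := by
  obtain ⟨hθ0, hθ1⟩ := hθ
  obtain ⟨hr0, hrb⟩ := hr
  have hfr : 0 ≤ f r * r ^ (θ - 1) := mul_nonneg (hfnn r ⟨hr0.le, hrb⟩) (by positivity)
  have hint_r : IntervalIntegrable (fun z => f z * z ^ (θ - 2)) volume 0 r :=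
    hint.mono_set (by rw [uIcc_of_le hr0.le, uIcc_of_le (hr0.le.trans hrb)]; gcongr)
  have hintegral : f r * r ^ (θ - 1) ≤ ∫ z in (0 : ℝ)..b, f z * z ^ (θ - 2) :=
    calc f r * r ^ (θ - 1) ≤ f r * r ^ (θ - 1) / θ := le_div_self hfr hθ0 hθ1
      _ ≤ ∫ z in (0 : ℝ)..r, f z * z ^ (θ - 2) :=
          div_mul_rpow_le_integral_mul_rpow hθ0 hr0
            (hf.subset (Icc_subset_Icc_right hrb) (convex_Icc 0 r)) hf0 hint_r
      _ ≤ ∫ z in (0 : ℝ)..b, f z * z ^ (θ - 2) :=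
          intervalIntegral.integral_mono_interval le_rfl hr0.le hrb
            ((ae_restrict_mem measurableSet_Ioc).mono fun z hz =>
              mul_nonneg (hfnn z (Ioc_subset_Icc_self hz)) (Real.rpow_nonneg hz.1.le _)) hint
  have hpow : θ * r ^ θ ≤ b ^ θ :=
    calc θ * r ^ θ ≤ r ^ θ := mul_le_of_le_one_left (by positivity) hθ1
      _ ≤ b ^ θ := Real.rpow_le_rpow hr0.le hrb hθ0.le
  calc r * (θ * r ^ (θ - 1) + c * f r * r ^ (θ - 2)) = θ * r ^ θ + c * (f r * r ^ (θ - 1)) := by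
        rw [show θ - 2 = θ - 1 - 1 by ring, Real.rpow_sub_one hr0.ne' (θ - 1),
          Real.rpow_sub_one hr0.ne']
        field_simp
    _ ≤ b ^ θ + c * ∫ z in (0 : ℝ)..b, f z * z ^ (θ - 2) := by gcongr

/- Only the behaviour of `f` to the left of `r` is known (at `r = 2 l₀` the data say nothing to the
right); where `f` is not differentiable at `r`, `deriv f r = 0` and the bound holds trivially. -/
lemma neg_mul_deriv_le_of_eventuallyEq_rpow_mul {f ψ : ℝ → ℝ} {p r ψ' : ℝ} (hr : 0 < r)
    (hp : p ≤ 0) (hψ : HasDerivWithinAt ψ ψ' (Iio r) r) (hψ' : 0 ≤ ψ') (hψr : 0 ≤ ψ r)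
    (hf : f =ᶠ[𝓝[<] r] fun x => x ^ p * ψ x) (hfr : f r = r ^ p * ψ r) :
    -(r * deriv f r) ≤ -p * f r := by
  have hfr_nonneg : 0 ≤ f r := hfr ▸ mul_nonneg (Real.rpow_nonneg hr.le p) hψr
  by_cases hd : DifferentiableAt ℝ f r
  · have hφ : HasDerivWithinAt (fun x => x ^ p * ψ x) (p * r ^ (p - 1) * ψ r + r ^ p * ψ')
        (Iio r) r :=
      (Real.hasDerivAt_rpow_const (Or.inl hr.ne')).hasDerivWithinAt.mul hψ
    have hderiv : deriv f r = p * r ^ (p - 1) * ψ r + r ^ p * ψ' :=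
      (uniqueDiffWithinAt_Iio r).eq_deriv _ hd.hasDerivAt.hasDerivWithinAt
        (hφ.congr_of_eventuallyEq hf hfr)
    have hrest : 0 ≤ r * (r ^ p * ψ') := by positivity
    rw [hderiv, hfr, Real.rpow_sub_one hr.ne']
    field_simp
    nlinarith
  · rw [deriv_zero_of_not_differentiableAt hd]
    nlinarith

lemma neg_mul_deriv_deriv_le {θ c b r : ℝ} {Φ g : ℝ → ℝ} (hθ : θ ∈ Icc 0 2) (hc : 0 ≤ c)
    (hr : r ∈ Ioc 0 b) (hΦ : MonotoneOn Φ (Ioc 0 b))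
    (hΦr : DifferentiableWithinAt ℝ Φ (Ioc 0 b) r) (hΦnn : 0 ≤ Φ r)
    (hg' : ∀ x ∈ Ioc 0 b, deriv g x = θ * x ^ (θ - 1) + c * Φ x * x ^ (θ - 2)) :
    -(r * deriv (deriv g) r) ≤ (2 - θ) * deriv g r := by
  obtain ⟨hθ0, hθ2⟩ := hθ
  have hform : ∀ x ∈ Ioc 0 b, deriv g x = x ^ (θ - 2) * (θ * x + c * Φ x) := fun x hx => by
    rw [hg' x hx, show θ - 1 = θ - 2 + 1 by ring, Real.rpow_add_one hx.1.ne']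
    ring
  have hleft : Ioo 0 r ∈ 𝓝[<] r := Ioo_mem_nhdsLT hr.1
  have hleft_sub : Ioo 0 r ⊆ Ioc 0 b := fun x hx => ⟨hx.1, hx.2.le.trans hr.2⟩
  have hΦ' : HasDerivWithinAt Φ (derivWithin Φ (Ioc 0 b) r) (Iio r) r :=
    hΦr.hasDerivWithinAt.mono_of_mem_nhdsWithin (mem_of_superset hleft hleft_sub)
  have hd : 0 ≤ derivWithin Φ (Ioc 0 b) r := hΦ.derivWithin_nonneg
  have key := neg_mul_deriv_le_of_eventuallyEq_rpow_mul (ψ := fun x => θ * x + c * Φ x) hr.1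
    (by linarith) (((hasDerivWithinAt_id r _).const_mul θ).add (hΦ'.const_mul c))
    (by simp only [mul_one]; positivity) (by have := hr.1; positivity)
    (eventually_of_mem hleft fun x hx => hform x (hleft_sub hx)) (hform r hr)
  rwa [neg_sub] at key

lemma concaveOn_Icc_of_contDiffOn_Ioc {f : ℝ → ℝ} {a b : ℝ} (hcont : ContinuousOn f (Icc a b))
    (hf : ContDiffOn ℝ 2 f (Ioc a b)) (hf2 : ∀ x ∈ Ioo a b, deriv (deriv f) x ≤ 0) :
    ConcaveOn ℝ (Icc a b) f := by
  have hf' : ContDiffOn ℝ 2 f (Ioo a b) := hf.mono Ioo_subset_Ioc_self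
  refine concaveOn_of_deriv2_nonpos (convex_Icc a b) hcont ?_ ?_ ?_ <;> rw [interior_Icc]
  exacts [hf'.differentiableOn (by norm_num),
    (hf'.deriv_of_isOpen (m := 1) isOpen_Ioo (by norm_num)).differentiableOn (by norm_num), hf2]

theorem stmt_7_general
    (l0 θ c0 : ℝ) (hθ : θ ∈ Ioc (0:ℝ) 1) (hc0 : 0 < c0)
    (Φ₁ : ℝ → ℝ)
    (hΦnn : ∀ r ∈ Icc 0 (2 * l0), 0 ≤ Φ₁ r)
    (hΦcont : ContinuousOn Φ₁ (Icc 0 (2 * l0)))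
    (hΦsmooth : ContDiffOn ℝ 3 Φ₁ (Ioc 0 (2 * l0)))
    (hΦ0 : Φ₁ 0 = 0)
    (hΦ1 : ∀ r ∈ Ioc 0 (2 * l0), 0 ≤ deriv Φ₁ r)
    (hΦ2 : ∀ r ∈ Ioc 0 (2 * l0), deriv (deriv Φ₁) r ≤ 0)
    (hint : IntervalIntegrable (fun z => Φ₁ z * z ^ (θ - 2)) volume 0 (2 * l0))
    (g : ℝ → ℝ)
    (hg : ∀ r, g r = r ^ θ + c0 * ∫ z in (0:ℝ)..r, Φ₁ z * z ^ (θ - 2))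
    (hg' : ∀ r ∈ Ioc 0 (2 * l0), deriv g r = θ * r ^ (θ - 1) + c0 * Φ₁ r * r ^ (θ - 2)) :
    (∀ r ∈ Ioc 0 (2 * l0),
      0 < deriv g r ∧ r * deriv g r ≤ g (2 * l0) ∧
        -(r * deriv (deriv g) r) ≤ (2 - θ) * deriv g r ∧
        r * deriv g r - r * deriv (deriv g) r / deriv g r ≤ g (2 * l0) + (2 - θ)) ∧
    BddAbove ((fun r => r * deriv g r - r * deriv (deriv g) r / deriv g r) '' Ioc 0 (2 * l0)) := by
  have hΦdiff : DifferentiableOn ℝ Φ₁ (Ioc 0 (2 * l0)) := hΦsmooth.differentiableOn (by norm_num)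
  have hmono : MonotoneOn Φ₁ (Ioc 0 (2 * l0)) := by
    refine monotoneOn_of_deriv_nonneg (convex_Ioc _ _) hΦdiff.continuousOn ?_ ?_ <;>
      rw [interior_Ioc]
    exacts [hΦdiff.mono Ioo_subset_Ioc_self, fun x hx => hΦ1 x (Ioo_subset_Ioc_self hx)]
  have hconc : ConcaveOn ℝ (Icc 0 (2 * l0)) Φ₁ :=
    concaveOn_Icc_of_contDiffOn_Ioc hΦcont (hΦsmooth.of_le (by norm_num))
      fun x hx => hΦ2 x (Ioo_subset_Ioc_self hx)
  have hpos : ∀ r ∈ Ioc 0 (2 * l0), 0 < deriv g r := fun r hr => by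
    have := hΦnn r (Ioc_subset_Icc_self hr)
    have := hr.1
    have := hθ.1
    rw [hg' r hr]
    positivity
  have hmul : ∀ r ∈ Ioc 0 (2 * l0), r * deriv g r ≤ g (2 * l0) := fun r hr => by
    rw [hg' r hr, hg]
    exact mul_rpow_add_le_rpow_add_integral hθ hc0.le hr hconc hΦ0 hΦnn hint
  have hneg : ∀ r ∈ Ioc 0 (2 * l0), -(r * deriv (deriv g) r) ≤ (2 - θ) * deriv g r :=
    fun r hr => neg_mul_deriv_deriv_le ⟨hθ.1.le, by linarith [hθ.2]⟩ hc0.le hr hmono (hΦdiff r hr)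
      (hΦnn r (Ioc_subset_Icc_self hr)) hg'
  have hsup : ∀ r ∈ Ioc 0 (2 * l0),
      r * deriv g r - r * deriv (deriv g) r / deriv g r ≤ g (2 * l0) + (2 - θ) := fun r hr => by
    have : -(r * deriv (deriv g) r) / deriv g r ≤ 2 - θ := (div_le_iff₀ (hpos r hr)).2 (hneg r hr)
    rw [neg_div] at this
    linarith [hmul r hr]
  exact ⟨fun r hr => ⟨hpos r hr, hmul r hr, hneg r hr, hsup r hr⟩,
    ⟨_, forall_mem_image.2 hsup⟩⟩

/-- Lemma 4.2 of the paper, second assertion: on (0,2l0] one has g' > 0,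
r g'(r) ≤ g(2l0) and −r g''(r) ≤ (2−θ) g'(r); hence
sup_{0<r≤2l0} ( r g'(r) − r g''(r)/g'(r) ) ≤ g(2l0) + (2−θ) < ∞. -/
theorem stmt_7
    (l0 θ c0 : ℝ) (hl0 : 0 < l0) (hθ : θ ∈ Ioc (0:ℝ) 1) (hc0 : 0 < c0)
    (Φ₁ : ℝ → ℝ)
    (hΦnn : ∀ r ∈ Icc 0 (2 * l0), 0 ≤ Φ₁ r)
    (hΦcont : ContinuousOn Φ₁ (Icc 0 (2 * l0)))
    (hΦsmooth : ContDiffOn ℝ 3 Φ₁ (Ioc 0 (2 * l0)))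
    (hΦ0 : Φ₁ 0 = 0)
    (hΦ1 : ∀ r ∈ Ioc 0 (2 * l0), 0 ≤ deriv Φ₁ r)
    (hΦ2 : ∀ r ∈ Ioc 0 (2 * l0), deriv (deriv Φ₁) r ≤ 0)
    (hΦ3 : ∀ r ∈ Ioc 0 (2 * l0), 0 ≤ deriv (deriv (deriv Φ₁)) r)
    (hint : IntervalIntegrable (fun z => Φ₁ z * z ^ (θ - 2)) volume 0 (2 * l0))
    (g : ℝ → ℝ)
    (hg : ∀ r, g r = r ^ θ + c0 * ∫ z in (0:ℝ)..r, Φ₁ z * z ^ (θ - 2))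
    (hg' : ∀ r ∈ Ioc 0 (2 * l0), deriv g r = θ * r ^ (θ - 1) + c0 * Φ₁ r * r ^ (θ - 2)) :
    (∀ r ∈ Ioc 0 (2 * l0),
      0 < deriv g r ∧ r * deriv g r ≤ g (2 * l0) ∧
        -(r * deriv (deriv g) r) ≤ (2 - θ) * deriv g r ∧
        r * deriv g r - r * deriv (deriv g) r / deriv g r ≤ g (2 * l0) + (2 - θ)) ∧
    BddAbove ((fun r => r * deriv g r - r * deriv (deriv g) r / deriv g r) '' Ioc 0 (2 * l0)) :=
  stmt_7_general l0 θ c0 hθ hc0 Φ₁ hΦnn hΦcont hΦsmooth hΦ0 hΦ1 hΦ2 hint g hg hg'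
end

section
/- For all real numbers r, s with 0 < s ≤ r, one has ψ₀(r + s) + ψ₀(r − s) − 2 ψ₀(r) ≤ ψ₀''(r) s². -/
open Set Filter MeasureTheory


lemma hasDerivAt_W (p q : ℝ) (P P' : ℝ → ℝ) (hP : ∀ x, HasDerivAt P (P' x) x)
    {x : ℝ} (hx : 0 < x) :
    HasDerivAt (fun y => y ^ p * (1 + y) ^ q * P y)
      (x ^ (p - 1) * (1 + x) ^ (q - 1) *
        (p * (1 + x) * P x + q * x * P x + x * (1 + x) * P' x)) x := by
  have hx1 : (0:ℝ) < 1 + x := by linarith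
  have h1 : HasDerivAt (fun y : ℝ => y ^ p) (p * x ^ (p - 1)) x :=
    Real.hasDerivAt_rpow_const (Or.inl hx.ne')
  have h2 : HasDerivAt (fun y : ℝ => (1 + y) ^ q) (q * (1 + x) ^ (q - 1)) x := by
    have := (Real.hasDerivAt_rpow_const (x := 1 + x) (p := q) (Or.inl hx1.ne')).comp x
      ((hasDerivAt_id x).const_add 1)
    simpa [Function.comp_def] using this
  have := (h1.mul h2).mul (hP x)
  refine this.congr_deriv ?_
  have e1 : x ^ p = x ^ (p - 1) * x := by
    rw [← Real.rpow_add_one hx.ne' (p - 1)]; ring_nf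
  have e2 : (1 + x) ^ q = (1 + x) ^ (q - 1) * (1 + x) := by
    rw [← Real.rpow_add_one hx1.ne' (q - 1)]; ring_nf
  simp only [Pi.mul_apply]
  rw [e1, e2]; ring

noncomputable def ff (θ x : ℝ) : ℝ := x ^ θ * (1 + x) ^ (-θ)
noncomputable def gg (θ x : ℝ) : ℝ := θ * (x ^ (θ-1) * (1+x) ^ (-θ-1))
noncomputable def hh (θ x : ℝ) : ℝ := θ * (x ^ (θ-2) * (1+x) ^ (-θ-2) * (θ-1-2*x))
noncomputable def kk (θ x : ℝ) : ℝ :=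
  θ * (x ^ (θ-3) * (1+x) ^ (-θ-3) * (6*x^2+6*(1-θ)*x+(θ-2)*(θ-1)))
noncomputable def mm (θ x : ℝ) : ℝ :=
  θ * (x ^ (θ-4) * (1+x) ^ (-θ-4) *
    ((θ-3-6*x)*(6*x^2+6*(1-θ)*x+(θ-2)*(θ-1)) + x*(1+x)*(12*x+6-6*θ)))

lemma hd_ff {θ x : ℝ} (hx : 0 < x) : HasDerivAt (ff θ) (gg θ x) x := by
  have := hasDerivAt_W θ (-θ) (fun _ => 1) (fun _ => 0) (fun _ => hasDerivAt_const _ 1) hx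
  simp only [mul_one, mul_zero] at this
  refine this.congr_deriv ?_
  rw [show -θ - (1:ℝ) = -θ-1 by ring]
  unfold gg; ring

lemma hd_gg {θ x : ℝ} (hx : 0 < x) : HasDerivAt (gg θ) (hh θ x) x := by
  have := ((hasDerivAt_W (θ-1) (-θ-1) (fun _ => 1) (fun _ => 0)
    (fun _ => hasDerivAt_const _ 1) hx).const_mul θ)
  simp only [mul_one, mul_zero] at this
  have e : (fun y => θ * (y ^ (θ-1) * (1+y) ^ (-θ-1))) = gg θ := by
    funext y; unfold gg; rfl
  rw [e] at this
  refine this.congr_deriv ?_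
  rw [show θ - 1 - (1:ℝ) = θ-2 by ring, show -θ - 1 - (1:ℝ) = -θ-2 by ring]
  unfold hh; ring

lemma hd_hh {θ x : ℝ} (hx : 0 < x) : HasDerivAt (hh θ) (kk θ x) x := by
  have := ((hasDerivAt_W (θ-2) (-θ-2) (fun y => θ-1-2*y) (fun _ => -2)
    (fun y => by simpa [sub_eq_add_neg] using ((hasDerivAt_id y).const_mul 2).neg.const_add (θ-1)) hx).const_mul θ)
  have e : (fun y => θ * (y ^ (θ-2) * (1+y) ^ (-θ-2) * (θ-1-2*y))) = hh θ := by
    funext y; unfold hh; ring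
  rw [e] at this
  refine this.congr_deriv ?_
  rw [show θ - 2 - (1:ℝ) = θ-3 by ring, show -θ - 2 - (1:ℝ) = -θ-3 by ring]
  unfold kk; ring

lemma hd_kk {θ x : ℝ} (hx : 0 < x) : HasDerivAt (kk θ) (mm θ x) x := by
  have hq : ∀ y : ℝ, HasDerivAt (fun y => 6*y^2+6*(1-θ)*y+(θ-2)*(θ-1)) (12*y+6*(1-θ)) y := by
    intro y
    have h1 : HasDerivAt (fun y : ℝ => 6*y^2) (12*y) y := by
      have := (hasDerivAt_pow 2 y).const_mul (6:ℝ)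
      refine this.congr_deriv ?_
      simp; ring
    have h2 : HasDerivAt (fun y : ℝ => 6*(1-θ)*y) (6*(1-θ)) y := by
      simpa using (hasDerivAt_id y).const_mul (6*(1-θ))
    simpa using (h1.add h2).add_const ((θ-2)*(θ-1))
  have := ((hasDerivAt_W (θ-3) (-θ-3) _ _ hq hx).const_mul θ)
  have e : (fun y => θ * (y ^ (θ-3) * (1+y) ^ (-θ-3) * (6*y^2+6*(1-θ)*y+(θ-2)*(θ-1)))) = kk θ := by
    funext y; unfold kk; ring
  rw [e] at this
  refine this.congr_deriv ?_
  rw [show θ - 3 - (1:ℝ) = θ-4 by ring, show -θ - 3 - (1:ℝ) = -θ-4 by ring]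
  unfold mm; ring

lemma mm_nonpos {θ x : ℝ} (hθ0 : 0 < θ) (hθ1 : θ < 1) (hx : 0 < x) : mm θ x ≤ 0 := by
  unfold mm
  have h1 : (0:ℝ) < x ^ (θ-4) := Real.rpow_pos_of_pos hx _
  have h2 : (0:ℝ) < (1+x) ^ (-θ-4) := Real.rpow_pos_of_pos (by linarith) _
  have hM : (θ-3-6*x)*(6*x^2+6*(1-θ)*x+(θ-2)*(θ-1)) + x*(1+x)*(12*x+6-6*θ) ≤ 0 := by
    nlinarith [mul_nonneg (show (0:ℝ) ≤ 1-θ by linarith) (sq_nonneg x),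
      mul_nonneg (mul_nonneg (show (0:ℝ) ≤ 1-θ by linarith) (show (0:ℝ) ≤ 2-θ by linarith)) hx.le,
      mul_nonneg (mul_nonneg (show (0:ℝ) ≤ 1-θ by linarith) (show (0:ℝ) ≤ 2-θ by linarith))
        (show (0:ℝ) ≤ 3-θ by linarith),
      pow_pos hx 3]
  nlinarith [mul_pos h1 h2, mul_nonneg (mul_pos h1 h2).le (neg_nonneg.mpr hM)]

lemma kk_anti {θ : ℝ} (hθ0 : 0 < θ) (hθ1 : θ < 1) : AntitoneOn (kk θ) (Ioi 0) := by
  apply antitoneOn_of_hasDerivWithinAt_nonpos (convex_Ioi 0) (f' := mm θ)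
  · exact fun x hx => ((hd_kk hx).continuousAt).continuousWithinAt
  · intro x hx
    rw [interior_Ioi] at hx
    exact (hd_kk hx).hasDerivWithinAt
  · intro x hx
    rw [interior_Ioi] at hx
    exact mm_nonpos hθ0 hθ1 hx

lemma hh_tangent {θ r y : ℝ} (hθ0 : 0 < θ) (hθ1 : θ < 1) (hr : 0 < r) (hy : 0 < y) :
    hh θ y - hh θ r ≤ kk θ r * (y - r) := by
  set D : ℝ → ℝ := fun z => hh θ z - kk θ r * z with hD
  have hdD : ∀ z : ℝ, 0 < z → HasDerivAt D (kk θ z - kk θ r) z := by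
    intro z hz
    exact ((hd_hh hz).sub ((hasDerivAt_id z).const_mul (kk θ r))).congr_deriv (by simp)
  have key : D y ≤ D r := by
    rcases le_total y r with hle | hle
    · have := monotoneOn_of_hasDerivWithinAt_nonneg (convex_Icc y r)
        (f := D) (f' := fun z => kk θ z - kk θ r)
        (fun z hz => ((hdD z (lt_of_lt_of_le hy hz.1)).continuousAt).continuousWithinAt)
        (fun z hz => by
          rw [interior_Icc] at hz
          exact (hdD z (lt_trans hy hz.1)).hasDerivWithinAt)
        (fun z hz => by
          rw [interior_Icc] at hz
          have : kk θ r ≤ kk θ z :=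
            kk_anti hθ0 hθ1 (mem_Ioi.mpr (lt_trans hy hz.1)) (mem_Ioi.mpr hr) hz.2.le
          exact sub_nonneg.mpr this)
      exact this (left_mem_Icc.mpr hle) (right_mem_Icc.mpr hle) hle
    · have := antitoneOn_of_hasDerivWithinAt_nonpos (convex_Icc r y)
        (f := D) (f' := fun z => kk θ z - kk θ r)
        (fun z hz => ((hdD z (lt_of_lt_of_le hr hz.1)).continuousAt).continuousWithinAt)
        (fun z hz => by
          rw [interior_Icc] at hz
          exact (hdD z (lt_trans hr hz.1)).hasDerivWithinAt)
        (fun z hz => by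
          rw [interior_Icc] at hz
          have : kk θ z ≤ kk θ r :=
            kk_anti hθ0 hθ1 (mem_Ioi.mpr hr) (mem_Ioi.mpr (lt_trans hr hz.1)) hz.1.le
          exact sub_nonpos.mpr this)
      exact this (left_mem_Icc.mpr hle) (right_mem_Icc.mpr hle) hle
  simp only [hD] at key
  nlinarith [key]

lemma hh_midpoint {θ r u : ℝ} (hθ0 : 0 < θ) (hθ1 : θ < 1) (hu : 0 < u) (hur : u < r) :
    hh θ (r + u) + hh θ (r - u) ≤ 2 * hh θ r := by
  have hr : 0 < r := lt_trans hu hur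
  have h1 := hh_tangent hθ0 hθ1 hr (show 0 < r + u by linarith)
  have h2 := hh_tangent hθ0 hθ1 hr (show 0 < r - u by linarith)
  nlinarith [h1, h2]

lemma gg_diff {θ r u : ℝ} (hθ0 : 0 < θ) (hθ1 : θ < 1) (hu : 0 < u) (hur : u < r) :
    gg θ (r + u) - gg θ (r - u) - 2 * hh θ r * u ≤ 0 := by
  have hr : 0 < r := lt_trans hu hur
  set G : ℝ → ℝ := fun t => gg θ (r + t) - gg θ (r - t) - 2 * hh θ r * t with hG
  have hdG : ∀ t : ℝ, t ∈ Icc (0:ℝ) u →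
      HasDerivAt G (hh θ (r + t) + hh θ (r - t) - 2 * hh θ r) t := by
    intro t ht
    have h1 : HasDerivAt (fun t : ℝ => gg θ (r + t)) (hh θ (r + t)) t := by
      have := (hd_gg (θ := θ) (show 0 < r + t by linarith [ht.1])).comp t
        ((hasDerivAt_id t).const_add r)
      simpa [Function.comp_def] using this
    have h2 : HasDerivAt (fun t : ℝ => gg θ (r - t)) (-hh θ (r - t)) t := by
      have hrt : 0 < r - t := by linarith [ht.2]
      have hinner : HasDerivAt (fun t : ℝ => r - t) (-1 : ℝ) t := by
        simpa [sub_eq_add_neg] using ((hasDerivAt_id t).neg.const_add r).congr_deriv rfl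
      have := (hd_gg (θ := θ) hrt).comp t hinner
      simpa [Function.comp_def] using this
    have h3 : HasDerivAt (fun t : ℝ => 2 * hh θ r * t) (2 * hh θ r) t := by
      simpa using (hasDerivAt_id t).const_mul (2 * hh θ r)
    have := (h1.sub h2).sub h3
    refine this.congr_deriv ?_
    ring
  have key : G u ≤ G 0 := by
    have := antitoneOn_of_hasDerivWithinAt_nonpos (convex_Icc (0:ℝ) u)
      (f := G) (f' := fun t => hh θ (r + t) + hh θ (r - t) - 2 * hh θ r)
      (fun t ht => (hdG t ht).continuousAt.continuousWithinAt)
      (fun t ht => by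
        rw [interior_Icc] at ht
        exact (hdG t (Ioo_subset_Icc_self ht)).hasDerivWithinAt)
      (fun t ht => by
        rw [interior_Icc] at ht
        have := hh_midpoint hθ0 hθ1 ht.1 (lt_trans ht.2 hur)
        exact sub_nonpos.mpr this)
    exact this (left_mem_Icc.mpr hu.le) (right_mem_Icc.mpr hu.le) hu.le
  simp only [hG] at key
  simp only [add_zero, sub_zero, mul_zero] at key
  linarith [key]

lemma ff_contAt {θ : ℝ} (hθ0 : 0 < θ) {x : ℝ} (hx : 0 ≤ x) : ContinuousAt (ff θ) x := by
  have h1 : ContinuousAt (fun y : ℝ => y ^ θ) x :=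
    Real.continuousAt_rpow_const x θ (Or.inr hθ0.le)
  have h2 : ContinuousAt (fun y : ℝ => (1 + y) ^ (-θ)) x := by
    have hbase : ContinuousAt (fun y : ℝ => 1 + y) x :=
      (continuous_const.add continuous_id).continuousAt
    exact (Real.continuousAt_rpow_const (1 + x) (-θ)
      (Or.inl (by positivity))).comp hbase
  exact h1.mul h2

lemma core_ineq {θ r s : ℝ} (hθ0 : 0 < θ) (hθ1 : θ < 1) (hs : 0 < s) (hsr : s ≤ r) :
    ff θ (r + s) + ff θ (r - s) - 2 * ff θ r ≤ hh θ r * s ^ 2 := by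
  have hr : 0 < r := lt_of_lt_of_le hs hsr
  set F : ℝ → ℝ := fun t => ff θ (r + t) + ff θ (r - t) - 2 * ff θ r - hh θ r * t ^ 2 with hF
  have hcont : ContinuousOn F (Icc 0 r) := by
    apply ContinuousOn.sub
    apply ContinuousOn.sub
    apply ContinuousOn.add
    · intro t ht
      exact ((ff_contAt hθ0 (by linarith [ht.1] : (0:ℝ) ≤ r + t)).comp
        ((continuous_const.add continuous_id).continuousAt)).continuousWithinAt
    · intro t ht
      exact ((ff_contAt hθ0 (by linarith [ht.2] : (0:ℝ) ≤ r - t)).comp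
        ((continuous_const.sub continuous_id).continuousAt)).continuousWithinAt
    · exact continuousOn_const
    · exact (continuousOn_const.mul (continuous_pow 2).continuousOn)
  have hderiv : ∀ t ∈ Ioo (0:ℝ) r,
      HasDerivAt F (gg θ (r + t) - gg θ (r - t) - 2 * hh θ r * t) t := by
    intro t ht
    have h1 : HasDerivAt (fun t : ℝ => ff θ (r + t)) (gg θ (r + t)) t := by
      have := (hd_ff (θ := θ) (show 0 < r + t by linarith [ht.1])).comp t
        ((hasDerivAt_id t).const_add r)
      simpa [Function.comp_def] using this
    have h2 : HasDerivAt (fun t : ℝ => ff θ (r - t)) (-gg θ (r - t)) t := by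
      have hrt : 0 < r - t := by linarith [ht.2]
      have hinner : HasDerivAt (fun t : ℝ => r - t) (-1 : ℝ) t := by
        simpa [sub_eq_add_neg] using ((hasDerivAt_id t).neg.const_add r).congr_deriv rfl
      have := (hd_ff (θ := θ) hrt).comp t hinner
      simpa [Function.comp_def] using this
    have h3 : HasDerivAt (fun t : ℝ => hh θ r * t ^ 2) (hh θ r * (2 * t)) t := by
      simpa using (hasDerivAt_pow 2 t).const_mul (hh θ r)
    have := ((h1.add h2).sub_const (2 * ff θ r)).sub h3
    refine this.congr_deriv ?_
    ring
  have key : F s ≤ F 0 := by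
    have := antitoneOn_of_hasDerivWithinAt_nonpos (convex_Icc (0:ℝ) r)
      (f := F) (f' := fun t => gg θ (r + t) - gg θ (r - t) - 2 * hh θ r * t)
      hcont
      (fun t ht => by
        rw [interior_Icc] at ht
        exact (hderiv t ht).hasDerivWithinAt)
      (fun t ht => by
        rw [interior_Icc] at ht
        exact gg_diff hθ0 hθ1 ht.1 ht.2)
    exact this (left_mem_Icc.mpr hr.le) ⟨hs.le, hsr⟩ hs.le
  simp only [hF] at key
  simp only [add_zero, sub_zero, mul_zero] at key
  nlinarith [key]

lemma div_form {θ x : ℝ} (hx : 0 ≤ x) : (x / (1 + x)) ^ θ = ff θ x := by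
  rw [Real.div_rpow hx (by linarith : (0:ℝ) ≤ 1 + x), div_eq_mul_inv,
    ← Real.rpow_neg (by linarith : (0:ℝ) ≤ 1 + x)]
  rfl


/-- Second-difference inequality for ψ₀(r) = b (r/(1+r))^θ from the proof of Theorem 3.2:
ψ₀(r+s) + ψ₀(r−s) − 2ψ₀(r) ≤ ψ₀''(r) s² for 0 < s ≤ r. -/
theorem stmt_10
    (b θ : ℝ) (hb : 0 < b) (hθ : θ ∈ Ioo (0:ℝ) 1)
    (ψ₀ : ℝ → ℝ) (hψ₀ : ∀ r, ψ₀ r = b * (r / (1 + r)) ^ θ)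
    (hψ₀'' : ∀ r : ℝ, 0 < r →
      deriv (deriv ψ₀) r = b * θ * r ^ (θ - 2) * (1 + r) ^ (-θ - 2) * (θ - 1 - 2 * r)) :
    ∀ r s : ℝ, 0 < s → s ≤ r →
      ψ₀ (r + s) + ψ₀ (r - s) - 2 * ψ₀ r ≤ deriv (deriv ψ₀) r * s ^ 2 := by
  intro r s hs hsr
  have hr : 0 < r := lt_of_lt_of_le hs hsr
  rw [hψ₀ (r + s), hψ₀ (r - s), hψ₀ r, hψ₀'' r hr]
  rw [div_form (by linarith : (0:ℝ) ≤ r + s), div_form (by linarith : (0:ℝ) ≤ r - s),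
    div_form hr.le]
  have hrhs : b * θ * r ^ (θ - 2) * (1 + r) ^ (-θ - 2) * (θ - 1 - 2 * r) = b * hh θ r := by
    unfold hh; ring
  rw [hrhs]
  have core := core_ineq (r := r) (s := s) hθ.1 hθ.2 hs hsr
  nlinarith [mul_le_mul_of_nonneg_left core hb.le]
end

section
/- For all real numbers r, s with 0 < s ≤ r, one has ψ₀(r + s) − ψ₀(r) − ψ₀'(r) s ≤ (s²/2) ψ₀''(2r). -/
open Set Filter MeasureTheory

private lemma hd_pq (p q x : ℝ) (hx : 0 < x) :
    HasDerivAt (fun y : ℝ => y ^ p * (1 + y) ^ q)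
      (x ^ (p - 1) * (1 + x) ^ (q - 1) * (p * (1 + x) + q * x)) x := by
  have h1x : (0:ℝ) < 1 + x := by linarith
  have h1 : HasDerivAt (fun y : ℝ => y ^ p) (p * x ^ (p - 1)) x :=
    Real.hasDerivAt_rpow_const (Or.inl hx.ne')
  have h2 : HasDerivAt (fun y : ℝ => (1 + y) ^ q) (q * (1 + x) ^ (q - 1)) x := by
    have hlin : HasDerivAt (fun y : ℝ => 1 + y) 1 x := (hasDerivAt_id x).const_add 1
    have := (Real.hasDerivAt_rpow_const (x := 1 + x) (p := q) (Or.inl h1x.ne')).comp x hlin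
    rw [mul_one] at this; exact this
  have := h1.mul h2
  refine this.congr_deriv ?_
  have e1 : x ^ p = x ^ (p - 1) * x := by
    rw [← Real.rpow_add_one hx.ne' (p - 1)]; congr 1; ring
  have e2 : (1 + x) ^ q = (1 + x) ^ (q - 1) * (1 + x) := by
    rw [← Real.rpow_add_one h1x.ne' (q - 1)]; congr 1; ring
  rw [e1, e2]; ring

/-- One-sided Taylor inequality for ψ₀(r) = b (r/(1+r))^θ from the proof of Theorem 3.2:
ψ₀(r+s) − ψ₀(r) − ψ₀'(r) s ≤ (s²/2) ψ₀''(2r) for 0 < s ≤ r. -/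
theorem stmt_11
    (b θ : ℝ) (hb : 0 < b) (hθ : θ ∈ Ioo (0:ℝ) 1)
    (ψ₀ : ℝ → ℝ) (hψ₀ : ∀ r, ψ₀ r = b * (r / (1 + r)) ^ θ)
    (hψ₀' : ∀ r : ℝ, 0 < r →
      deriv ψ₀ r = b * θ * r ^ (θ - 1) * (1 + r) ^ (-θ - 1))
    (hψ₀'' : ∀ r : ℝ, 0 < r →
      deriv (deriv ψ₀) r = b * θ * r ^ (θ - 2) * (1 + r) ^ (-θ - 2) * (θ - 1 - 2 * r)) :
    ∀ r s : ℝ, 0 < s → s ≤ r →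
      ψ₀ (r + s) - ψ₀ r - deriv ψ₀ r * s ≤ (s ^ 2 / 2) * deriv (deriv ψ₀) (2 * r) := by
  obtain ⟨hθ0, hθ1⟩ := hθ
  set F : ℝ → ℝ := fun x => b * θ * (x ^ (θ - 1) * (1 + x) ^ (-θ - 1)) with hF
  set G : ℝ → ℝ := fun x => b * θ * (x ^ (θ - 2) * (1 + x) ^ (-θ - 2) * (θ - 1 - 2 * x))
    with hG
  -- first derivative
  have hd1 : ∀ x : ℝ, 0 < x → HasDerivAt ψ₀ (F x) x := by
    intro x hx
    have h1x : (0:ℝ) < 1 + x := by linarith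
    have hev : (fun y : ℝ => b * (y ^ θ * (1 + y) ^ (-θ))) =ᶠ[nhds x] ψ₀ := by
      filter_upwards [IsOpen.mem_nhds isOpen_Ioi hx] with y hy
      have hy' : (0:ℝ) < y := hy
      have h1y : (0:ℝ) < 1 + y := by linarith
      rw [hψ₀, Real.div_rpow hy'.le h1y.le, Real.rpow_neg h1y.le, div_eq_mul_inv]
    have hder : HasDerivAt (fun y : ℝ => b * (y ^ θ * (1 + y) ^ (-θ))) (F x) x := by
      have := (hd_pq θ (-θ) x hx).const_mul b
      refine this.congr_deriv ?_
      simp only [hF]; ring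
    exact hder.congr_of_eventuallyEq hev.symm
  -- second derivative
  have hd2 : ∀ x : ℝ, 0 < x → HasDerivAt F (G x) x := by
    intro x hx
    have := (hd_pq (θ - 1) (-θ - 1) x hx).const_mul (b * θ)
    refine this.congr_deriv ?_
    rw [hG]
    have e : (θ - 1) * (1 + x) + (-θ - 1) * x = θ - 1 - 2 * x := by ring
    rw [show θ - 1 - 1 = θ - 2 by ring, show -θ - 1 - 1 = -θ - 2 by ring, e]
  -- derivative of G and monotonicity
  have hd3 : ∀ x : ℝ, 0 < x → HasDerivAt G
      (b * θ * (x ^ (θ - 3) * (1 + x) ^ (-θ - 3) * ((θ - 2) * (1 + x) + (-θ - 2) * x)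
        * (θ - 1 - 2 * x) + x ^ (θ - 2) * (1 + x) ^ (-θ - 2) * (-2))) x := by
    intro x hx
    have hlin : HasDerivAt (fun y : ℝ => θ - 1 - 2 * y) (-2) x := by
      simpa using ((hasDerivAt_id x).const_mul (2:ℝ)).const_sub (θ - 1)
    have := ((hd_pq (θ - 2) (-θ - 2) x hx).mul hlin).const_mul (b * θ)
    refine this.congr_deriv ?_
    all_goals try rw [show θ - 2 - 1 = θ - 3 by ring, show -θ - 2 - 1 = -θ - 3 by ring]
    all_goals ring
  have hGmono : ∀ x y : ℝ, 0 < x → x ≤ y → G x ≤ G y := by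
    intro x y hx hxy
    rcases eq_or_lt_of_le hxy with rfl | hlt
    · exact le_rfl
    · have hcont : ContinuousOn G (Icc x y) := fun z hz =>
        ((hd3 z (lt_of_lt_of_le hx hz.1)).continuousAt).continuousWithinAt
      obtain ⟨c, hc, hceq⟩ := exists_hasDerivAt_eq_slope G
        (fun z => b * θ * (z ^ (θ - 3) * (1 + z) ^ (-θ - 3)
          * ((θ - 2) * (1 + z) + (-θ - 2) * z) * (θ - 1 - 2 * z)
          + z ^ (θ - 2) * (1 + z) ^ (-θ - 2) * (-2))) hlt hcont
        (fun z hz => hd3 z (hx.trans hz.1))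
      have hc0 : 0 < c := hx.trans hc.1
      have h1c : (0:ℝ) < 1 + c := by linarith
      -- the derivative of G at c is nonnegative
      have hpos : 0 ≤ b * θ * (c ^ (θ - 3) * (1 + c) ^ (-θ - 3)
          * ((θ - 2) * (1 + c) + (-θ - 2) * c) * (θ - 1 - 2 * c)
          + c ^ (θ - 2) * (1 + c) ^ (-θ - 2) * (-2)) := by
        have e1 : c ^ (θ - 2) = c ^ (θ - 3) * c := by
          rw [← Real.rpow_add_one hc0.ne' (θ - 3)]; congr 1; ring
        have e2 : (1 + c) ^ (-θ - 2) = (1 + c) ^ (-θ - 3) * (1 + c) := by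
          rw [← Real.rpow_add_one h1c.ne' (-θ - 3)]; congr 1; ring
        rw [e1, e2]
        have hA : (0:ℝ) < c ^ (θ - 3) := Real.rpow_pos_of_pos hc0 _
        have hB : (0:ℝ) < (1 + c) ^ (-θ - 3) := Real.rpow_pos_of_pos h1c _
        have hbr : 0 ≤ ((θ - 2) * (1 + c) + (-θ - 2) * c) * (θ - 1 - 2 * c)
            - 2 * (c * (1 + c)) := by nlinarith [sq_nonneg c, mul_pos hc0 h1c]
        have hbt : 0 < b * θ := mul_pos hb hθ0
        have := mul_nonneg (mul_nonneg hbt.le (mul_nonneg hA.le hB.le)) hbr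
        nlinarith [this]
      have := hceq ▸ hpos
      have hslope : 0 ≤ (G y - G x) / (y - x) := by rw [← hceq]; exact hpos
      have hyx : 0 < y - x := by linarith
      nlinarith [mul_nonneg hslope hyx.le, div_mul_cancel₀ (G y - G x) hyx.ne']
  -- main argument
  intro r s hs hsr
  have hr : 0 < r := hs.trans_le hsr
  have hderiv1 : deriv ψ₀ r = F r := (hd1 r hr).deriv
  have hderiv2 : deriv (deriv ψ₀) (2 * r) = G (2 * r) := by
    have hev : deriv ψ₀ =ᶠ[nhds (2 * r)] F := by
      filter_upwards [IsOpen.mem_nhds isOpen_Ioi (by linarith : (0:ℝ) < 2 * r)] with y hy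
      exact (hd1 y hy).deriv
    rw [hev.deriv_eq, (hd2 (2 * r) (by linarith)).deriv]
  rw [hderiv1, hderiv2]
  -- φ x = ψ₀ x - F r * x - G(2r) (x-r)²/2
  set φ : ℝ → ℝ := fun x => ψ₀ x - F r * x - G (2 * r) * ((x - r) ^ 2 / 2) with hφ
  have hdφ : ∀ x : ℝ, 0 < x → HasDerivAt φ (F x - F r - G (2 * r) * (x - r)) x := by
    intro x hx
    have h1 : HasDerivAt (fun y : ℝ => F r * y) (F r) x := by
      simpa using (hasDerivAt_id x).const_mul (F r)
    have h2 : HasDerivAt (fun y : ℝ => (y - r) ^ 2 / 2) (x - r) x := by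
      have hl : HasDerivAt (fun y : ℝ => y - r) 1 x := (hasDerivAt_id x).sub_const r
      have := (hl.pow 2).div_const 2
      simpa using this
    exact ((hd1 x hx).sub h1).sub (h2.const_mul (G (2 * r)))
  have hcontφ : ContinuousOn φ (Icc r (r + s)) := fun z hz =>
    ((hdφ z (hr.trans_le hz.1)).continuousAt).continuousWithinAt
  obtain ⟨d, hd, hdeq⟩ := exists_hasDerivAt_eq_slope φ
    (fun x => F x - F r - G (2 * r) * (x - r)) (by linarith) hcontφ
    (fun z hz => hdφ z (hr.trans hz.1))
  -- φ'(d) ≤ 0, via MVT for F on [r,d]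
  have hdr : r < d := hd.1
  have hd2r : d < 2 * r := by have := hd.2; linarith
  have hcontF : ContinuousOn F (Icc r d) := fun z hz =>
    ((hd2 z (hr.trans_le hz.1)).continuousAt).continuousWithinAt
  obtain ⟨c, hc, hceq⟩ := exists_hasDerivAt_eq_slope F G hdr hcontF
    (fun z hz => hd2 z (hr.trans hz.1))
  have hc0 : 0 < c := hr.trans hc.1
  have hGc : G c ≤ G (2 * r) := hGmono c (2 * r) hc0 (by linarith [hc.2])
  have hFd : F d - F r = G c * (d - r) := by
    have hdrne : d - r ≠ 0 := by intro h; linarith [hdr, sub_eq_zero.mp h]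
    field_simp at hceq
    linarith [hceq]
  have hφ'd : F d - F r - G (2 * r) * (d - r) ≤ 0 := by
    rw [hFd]
    have : (G c - G (2 * r)) * (d - r) ≤ 0 :=
      mul_nonpos_of_nonpos_of_nonneg (by linarith) (by linarith)
    nlinarith [this]
  have hφdiff : φ (r + s) - φ r ≤ 0 := by
    have hsne : r + s - r ≠ 0 := by simp; linarith
    have := hdeq
    field_simp at this
    nlinarith [this, hφ'd, hs]
  simp only [hφ] at hφdiff
  nlinarith [hφdiff]
end

section
/- Let b1, b2 > 0 and define γ0 : (0, ∞) → ℝ by γ0(x) = b1 x log(1 + 1/x) − b2 x. Then for all x > y > 0 one has γ0(x) − γ0(y) ≤ b1 (x − y) log(1 + 1/(x − y)) − b2 (x − y). Moreover, if l0 > 0 satisfies b1 log(1 + 1/l0) ≤ b2/2, then for all x > y > 0 with x − y > l0 one has γ0(x) − γ0(y) ≤ −(b2/2)(x − y). -/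
open Set

/-! Since `t ↦ log (1 + 1 / t)` decreases on `(0, ∞)`, the map `t ↦ t log (1 + 1 / t)` is
subadditive there; applied to `x = (x - y) + y` this is the first bound. For `x - y > l0` the same
monotonicity gives `b1 log (1 + 1 / (x - y)) ≤ b2 / 2`, which turns the first bound into the
second. -/

lemma antitoneOn_log_one_add_one_div : AntitoneOn (fun t : ℝ => Real.log (1 + 1 / t)) (Ioi 0) :=
  fun a ha b hb hab => by
    have hb : 0 < b := hb
    exact Real.log_le_log (by positivity) (by gcongr)

lemma add_mul_le_of_antitoneOn {f : ℝ → ℝ} (hf : AntitoneOn f (Ioi 0)) {u v : ℝ}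
    (hu : 0 < u) (hv : 0 < v) : (u + v) * f (u + v) ≤ u * f u + v * f v := by
  have huv : 0 < u + v := add_pos hu hv
  have hfu : f (u + v) ≤ f u := hf hu huv (by linarith)
  have hfv : f (u + v) ≤ f v := hf hv huv (by linarith)
  calc (u + v) * f (u + v) = u * f (u + v) + v * f (u + v) := add_mul u v _
    _ ≤ u * f u + v * f v := by gcongr

theorem stmt_13_general
    (b1 b2 : ℝ) (hb1 : 0 < b1)
    (γ0 : ℝ → ℝ) (hγ0 : ∀ x, 0 < x → γ0 x = b1 * x * Real.log (1 + 1 / x) - b2 * x) :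
    (∀ x y : ℝ, 0 < y → y < x →
      γ0 x - γ0 y ≤ b1 * (x - y) * Real.log (1 + 1 / (x - y)) - b2 * (x - y)) ∧
    ∀ l0 : ℝ, 0 < l0 → b1 * Real.log (1 + 1 / l0) ≤ b2 / 2 →
      ∀ x y : ℝ, 0 < y → y < x → l0 < x - y →
        γ0 x - γ0 y ≤ -(b2 / 2) * (x - y) := by
  have hdiff : ∀ x y : ℝ, 0 < y → y < x →
      γ0 x - γ0 y ≤ b1 * (x - y) * Real.log (1 + 1 / (x - y)) - b2 * (x - y) := by
    intro x y hy hyx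
    have hsub := add_mul_le_of_antitoneOn antitoneOn_log_one_add_one_div (sub_pos.2 hyx) hy
    rw [sub_add_cancel] at hsub
    rw [hγ0 x (hy.trans hyx), hγ0 y hy]
    nlinarith [mul_le_mul_of_nonneg_left hsub hb1.le]
  refine ⟨hdiff, fun l0 hl0 hl x y hy hyx hlxy => ?_⟩
  have hlog : b1 * Real.log (1 + 1 / (x - y)) ≤ b2 / 2 :=
    (mul_le_mul_of_nonneg_left
      (antitoneOn_log_one_add_one_div hl0 (hl0.trans hlxy) hlxy.le) hb1.le).trans hl
  nlinarith [hdiff x y hy hyx, mul_le_mul_of_nonneg_left hlog (sub_pos.2 hyx).le]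

/-- Example 3.6(1) of the paper: the drift γ0(x) = b1 x log(1+1/x) − b2 x satisfies
γ0(x) − γ0(y) ≤ b1 (x−y) log(1+1/(x−y)) − b2 (x−y) for x > y > 0; moreover if
b1 log(1+1/l0) ≤ b2/2 then γ0(x) − γ0(y) ≤ −(b2/2)(x−y) whenever x − y > l0. -/
theorem stmt_13
    (b1 b2 : ℝ) (hb1 : 0 < b1) (hb2 : 0 < b2)
    (γ0 : ℝ → ℝ) (hγ0 : ∀ x, 0 < x → γ0 x = b1 * x * Real.log (1 + 1 / x) - b2 * x) :
    (∀ x y : ℝ, 0 < y → y < x →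
      γ0 x - γ0 y ≤ b1 * (x - y) * Real.log (1 + 1 / (x - y)) - b2 * (x - y)) ∧
    ∀ l0 : ℝ, 0 < l0 → b1 * Real.log (1 + 1 / l0) ≤ b2 / 2 →
      ∀ x y : ℝ, 0 < y → y < x → l0 < x - y →
        γ0 x - γ0 y ≤ -(b2 / 2) * (x - y) :=
  stmt_13_general b1 b2 hb1 γ0 hγ0
end

section
/- Let b1, b2 > 0 and δ > 1, and define γ0 : [0, ∞) → ℝ by γ0(x) = b1 x − b2 x^δ. Then for all x > y ≥ 0 one has γ0(x) − γ0(y) ≤ b1 (x − y) − b2 (x − y)^δ. Moreover, setting l0 := (2 b1 / b2)^{1/(δ−1)}, for all x > y ≥ 0 with x − y > l0 one has γ0(x) − γ0(y) ≤ −(b2/2)(x − y)^δ. -/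
/-! Superadditivity of `r ↦ r ^ δ` on `[0, ∞)` for `δ ≥ 1` gives the first bound. For the second,
`x - y > l0` means `(x - y) ^ (δ - 1) > 2 b1 / b2`, i.e. `b1 (x - y) < (b2 / 2) (x - y) ^ δ`, so the
linear term is absorbed by half of the power term. -/

namespace Real

lemma sub_rpow_le_rpow_sub_rpow {p a b : ℝ} (hb : 0 ≤ b) (hba : b ≤ a) (hp : 1 ≤ p) :
    (a - b) ^ p ≤ a ^ p - b ^ p := by
  have := add_rpow_le_rpow_add (sub_nonneg.2 hba) hb hp
  rw [sub_add_cancel] at this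
  linarith

lemma mul_lt_rpow_of_rpow_inv_sub_one_lt {c r p : ℝ} (hc : 0 ≤ c) (hp : 1 < p)
    (h : c ^ (1 / (p - 1)) < r) : c * r < r ^ p := by
  have hr : 0 < r := (rpow_nonneg hc _).trans_lt h
  have hp1 : 0 < p - 1 := sub_pos.2 hp
  have hc_lt : c < r ^ (p - 1) := by
    rwa [one_div, rpow_inv_lt_iff_of_pos hc hr.le hp1] at h
  calc c * r < r ^ (p - 1) * r := mul_lt_mul_of_pos_right hc_lt hr
    _ = r ^ p := by rw [← rpow_add_one hr.ne', sub_add_cancel]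

end Real

/-- Example 3.6(2) of the paper: the drift γ0(x) = b1 x − b2 x^δ satisfies
γ0(x) − γ0(y) ≤ b1 (x−y) − b2 (x−y)^δ for x > y ≥ 0, and with
l0 = (2b1/b2)^{1/(δ−1)} one has γ0(x) − γ0(y) ≤ −(b2/2)(x−y)^δ whenever x − y > l0. -/
theorem stmt_15
    (b1 b2 δ : ℝ) (hb1 : 0 < b1) (hb2 : 0 < b2) (hδ : 1 < δ)
    (γ0 : ℝ → ℝ) (hγ0 : ∀ x, 0 ≤ x → γ0 x = b1 * x - b2 * x ^ δ) :
    (∀ x y : ℝ, 0 ≤ y → y < x →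
      γ0 x - γ0 y ≤ b1 * (x - y) - b2 * (x - y) ^ δ) ∧
    ∀ x y : ℝ, 0 ≤ y → y < x → (2 * b1 / b2) ^ (1 / (δ - 1)) < x - y →
      γ0 x - γ0 y ≤ -(b2 / 2) * (x - y) ^ δ := by
  have increment_le : ∀ x y : ℝ, 0 ≤ y → y < x →
      γ0 x - γ0 y ≤ b1 * (x - y) - b2 * (x - y) ^ δ := by
    intro x y hy hyx
    rw [hγ0 x (hy.trans hyx.le), hγ0 y hy]
    have := mul_le_mul_of_nonneg_left (Real.sub_rpow_le_rpow_sub_rpow hy hyx.le hδ.le) hb2.le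
    linarith
  refine ⟨increment_le, fun x y hy hyx hl => ?_⟩
  have absorb := mul_lt_mul_of_pos_left
    (Real.mul_lt_rpow_of_rpow_inv_sub_one_lt (by positivity) hδ hl) (half_pos hb2)
  rw [← mul_assoc, show b2 / 2 * (2 * b1 / b2) = b1 by field_simp] at absorb
  linarith [increment_le x y hy hyx]
end

section
/- Let b1, b2, c, δ > 0 and θ > 1. Then there exist constants l0 > 0 and k > 0 such that for all real numbers x > y ≥ 0 with x − y > l0, one has (b1 x − b2 exp(c x^δ)) − (b1 y − b2 exp(c y^δ)) ≤ −k (x − y)^θ. -/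
/-!
Write `L = x - y`; it suffices that `b1 L + L^θ ≤ b2 (e^{c x^δ} - e^{c y^δ})`. The log-mean
inequality `e^a - e^b ≥ (a - b) e^{(a+b)/2}` and the bound `x^δ - y^δ ≥ min 1 δ · x^{δ-1} L`
(concavity of `t ↦ t^δ` if `δ ≤ 1`, monotonicity of `t ↦ t^{δ-1}` if `δ ≥ 1`) bound the right
side below by `b2 c min 1 δ · x^{δ-1} e^{c x^δ / 2} · L`. As `L ≤ x` and `L ≥ 1`, the left side is
at most `(b1 + 1) x^{θ-1} L`, and `x^{θ-1} = o(x^{δ-1} e^{c x^δ / 2})`.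
-/

open Filter Real Asymptotics

theorem sub_mul_exp_add_half_le_exp_sub_exp {a b : ℝ} (hba : b ≤ a) :
    (a - b) * exp ((a + b) / 2) ≤ exp a - exp b := by
  have hsinh : (a - b) / 2 ≤ sinh ((a - b) / 2) := self_le_sinh_iff.2 (by linarith)
  have hexp : exp a - exp b = 2 * exp ((a + b) / 2) * sinh ((a - b) / 2) := by
    have ha : exp a = exp ((a + b) / 2) * exp ((a - b) / 2) := by rw [← exp_add]; ring_nf
    have hb : exp b = exp ((a + b) / 2) * exp (-((a - b) / 2)) := by rw [← exp_add]; ring_nf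
    rw [sinh_eq, ha, hb]
    ring
  rw [hexp]
  nlinarith [exp_pos ((a + b) / 2)]

theorem mul_rpow_sub_one_mul_sub_le_rpow_sub_rpow_of_le_one {x y p : ℝ} (hy : 0 ≤ y)
    (hyx : y ≤ x) (hp0 : 0 ≤ p) (hp1 : p ≤ 1) : p * x ^ (p - 1) * (x - y) ≤ x ^ p - y ^ p := by
  rcases (hy.trans hyx).eq_or_lt with rfl | hx
  · simp [le_antisymm hyx hy]
  have hbern : (1 + (y / x - 1)) ^ p ≤ 1 + p * (y / x - 1) :=
    rpow_one_add_le_one_add_mul_self (by linarith [div_nonneg hy hx.le]) hp0 hp1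
  rw [add_sub_cancel, div_rpow hy hx.le, div_le_iff₀ (rpow_pos_of_pos hx p)] at hbern
  rw [rpow_sub_one hx.ne']
  have hscale : (1 + p * (y / x - 1)) * x ^ p = x ^ p - p * (x ^ p / x) * (x - y) := by
    field_simp; ring
  linarith

theorem rpow_sub_one_mul_sub_le_rpow_sub_rpow_of_one_le {x y p : ℝ} (hy : 0 ≤ y) (hyx : y ≤ x)
    (hp : 1 ≤ p) :
    x ^ (p - 1) * (x - y) ≤ x ^ p - y ^ p := by
  have hx : 0 ≤ x := hy.trans hyx
  have hmono : y * y ^ (p - 1) ≤ y * x ^ (p - 1) :=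
    mul_le_mul_of_nonneg_left (rpow_le_rpow hy hyx (by linarith)) hy
  have hsplit (z : ℝ) (hz : 0 ≤ z) : z ^ p = z * z ^ (p - 1) := by
    rw [← rpow_one_add' hz (by linarith), add_sub_cancel]
  rw [hsplit x hx, hsplit y hy]
  linarith

theorem isLittleO_rpow_exp_mul_rpow_atTop (s : ℝ) {b p : ℝ} (hb : 0 < b) (hp : 0 < p) :
    (fun x : ℝ => x ^ s) =o[atTop] fun x => exp (b * x ^ p) := by
  refine ((isLittleO_rpow_exp_pos_mul_atTop (s / p) hb).comp_tendsto
    (tendsto_rpow_atTop hp)).congr' ?_ EventuallyEq.rfl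
  filter_upwards [eventually_ge_atTop 0] with x hx
  simp only [Function.comp, ← rpow_mul hx, mul_div_cancel₀ s hp.ne']

theorem isLittleO_rpow_rpow_mul_exp_mul_rpow_atTop (s r : ℝ) {b p : ℝ} (hb : 0 < b)
    (hp : 0 < p) :
    (fun x : ℝ => x ^ s) =o[atTop] fun x => x ^ r * exp (b * x ^ p) := by
  refine ((isBigO_refl (fun x : ℝ => x ^ r) atTop).mul_isLittleO
    (isLittleO_rpow_exp_mul_rpow_atTop (s - r) hb hp)).congr' ?_ EventuallyEq.rfl
  filter_upwards [eventually_gt_atTop 0] with x hx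
  rw [← rpow_add hx, add_sub_cancel]

theorem mul_exp_half_mul_rpow_le_exp_mul_rpow_sub_exp_mul_rpow {x y c p : ℝ} (hy : 0 ≤ y)
    (hyx : y ≤ x) (hc : 0 ≤ c) (hp : 0 < p) :
    c * min 1 p * x ^ (p - 1) * (x - y) * exp (c / 2 * x ^ p) ≤
      exp (c * x ^ p) - exp (c * y ^ p) := by
  have hpow : min 1 p * x ^ (p - 1) * (x - y) ≤ x ^ p - y ^ p := by
    rcases le_total p 1 with h | h
    · rw [min_eq_right h]
      exact mul_rpow_sub_one_mul_sub_le_rpow_sub_rpow_of_le_one hy hyx hp.le h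
    · rw [min_eq_left h, one_mul]
      exact rpow_sub_one_mul_sub_le_rpow_sub_rpow_of_one_le hy hyx h
  have hmono : c * y ^ p ≤ c * x ^ p := by gcongr
  calc c * min 1 p * x ^ (p - 1) * (x - y) * exp (c / 2 * x ^ p)
      = c * (min 1 p * x ^ (p - 1) * (x - y)) * exp (c / 2 * x ^ p) := by ring
    _ ≤ (c * x ^ p - c * y ^ p) * exp ((c * x ^ p + c * y ^ p) / 2) := by
      rw [← mul_sub]
      gcongr
      · linarith
      · have : 0 ≤ c * y ^ p := by positivity
        linarith
    _ ≤ exp (c * x ^ p) - exp (c * y ^ p) := sub_mul_exp_add_half_le_exp_sub_exp hmono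

theorem eventually_mul_rpow_le_mul_rpow_mul_exp (s r : ℝ) {A B b p : ℝ} (hA : 0 < A)
    (hB : 0 < B) (hb : 0 < b) (hp : 0 < p) :
    ∀ᶠ x in atTop, A * x ^ s ≤ B * x ^ r * exp (b * x ^ p) := by
  filter_upwards [(isLittleO_rpow_rpow_mul_exp_mul_rpow_atTop s r hb hp).bound (div_pos hB hA),
    eventually_ge_atTop 0] with x h hx
  rw [norm_of_nonneg (by positivity), norm_of_nonneg (by positivity), div_mul_eq_mul_div,
    le_div_iff₀ hA] at h
  linarith

/-- Example 3.6(3) of the paper: for the drift γ0(x) = b1 x − b2 e^{c x^δ} there exist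
l0, k > 0 with γ0(x) − γ0(y) ≤ −k (x−y)^θ whenever x > y ≥ 0 and x − y > l0, for any θ > 1. -/
theorem stmt_16
    (b1 b2 c δ θ : ℝ) (hb1 : 0 < b1) (hb2 : 0 < b2) (hc : 0 < c) (hδ : 0 < δ)
    (hθ : 1 < θ) :
    ∃ l0 > (0:ℝ), ∃ k > (0:ℝ), ∀ x y : ℝ, 0 ≤ y → y < x → l0 < x - y →
      (b1 * x - b2 * Real.exp (c * x ^ δ)) - (b1 * y - b2 * Real.exp (c * y ^ δ))
        ≤ -k * (x - y) ^ θ := by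
  set K := b2 * c * min 1 δ
  have hK : 0 < K := by positivity
  obtain ⟨l1, hl1⟩ := eventually_atTop.1 <| eventually_mul_rpow_le_mul_rpow_mul_exp (θ - 1)
    (δ - 1) (by linarith : 0 < b1 + 1) hK (half_pos hc) hδ
  refine ⟨max 1 l1, by positivity, 1, one_pos, fun x y hy hyx hL => ?_⟩
  have hL1 : 1 ≤ x - y := (le_max_left _ _).trans hL.le
  have hgrowth := hl1 x ((le_max_right _ _).trans (hL.le.trans (by linarith)))
  have key : b1 * (x - y) + (x - y) ^ θ ≤ b2 * (exp (c * x ^ δ) - exp (c * y ^ δ)) :=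
    calc b1 * (x - y) + (x - y) ^ θ
        ≤ (b1 + 1) * (x - y) ^ (θ - 1) * (x - y) := by
          rw [mul_assoc, ← rpow_add_one (by linarith), sub_add_cancel]
          nlinarith [self_le_rpow_of_one_le hL1 hθ.le]
      _ ≤ (b1 + 1) * x ^ (θ - 1) * (x - y) := by gcongr; linarith
      _ ≤ K * x ^ (δ - 1) * exp (c / 2 * x ^ δ) * (x - y) := by gcongr
      _ = b2 * (c * min 1 δ * x ^ (δ - 1) * (x - y) * exp (c / 2 * x ^ δ)) := by ring
      _ ≤ b2 * (exp (c * x ^ δ) - exp (c * y ^ δ)) := by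
          gcongr; exact mul_exp_half_mul_rpow_le_exp_mul_rpow_sub_exp_mul_rpow hy hyx.le hc.le hδ
  linarith
end
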